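/- arXiv:1912.06134 — 5 statements merged into one kernel-verified Lean document; each statement's English description precedes it below -/
import Mathlib

section
/- For the first Ding–Helleseth sequence, every a ∈ Q satisfies S(ξ_N^a) = (q−1)/2. -/
open Finset

section DH9Aux

lemma dh_sum_pair (f : ℕ → ℂ) (n : ℕ) :
    ∑ t ∈ Finset.range n, (f (2*t) + f (2*t+1)) = ∑ s ∈ Finset.range (2*n), f s := by
  induction n with
  | zero => simp
  | succ n ih =>
    rw [Finset.sum_range_succ, ih, show 2*(n+1) = 2*n+1+1 by ring,
      Finset.sum_range_succ, Finset.sum_range_succ]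
    ring

lemma dh_sum_periodic (f : ℕ → ℂ) (T m : ℕ) (hf : ∀ s, f (s + T) = f s) :
    ∑ s ∈ Finset.range (m*T), f s = m * ∑ s ∈ Finset.range T, f s := by
  have shift : ∀ k i, f (k*T + i) = f i := by
    intro k
    induction k with
    | zero => simp
    | succ k ih =>
      intro i
      rw [show (k+1)*T + i = (k*T + i) + T by ring, hf, ih]
  induction m with
  | zero => simp
  | succ m ih =>
    rw [Nat.succ_mul, Finset.sum_range_add, ih]
    have : ∑ i ∈ Finset.range T, f (m*T + i) = ∑ i ∈ Finset.range T, f i :=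
      Finset.sum_congr rfl (fun i _ => shift m i)
    rw [this]
    push_cast
    ring

lemma dh_sum_zmod {n : ℕ} [NeZero n] (f : ℕ → ℂ) :
    ∑ c : ZMod n, f c.val = ∑ j ∈ Finset.range n, f j := by
  apply Finset.sum_nbij' (i := fun c : ZMod n => c.val) (j := fun j : ℕ => (j : ZMod n))
  · intro c _; exact Finset.mem_range.mpr (ZMod.val_lt c)
  · intro j _; exact Finset.mem_univ _
  · intro c _; exact ZMod.natCast_zmod_val c
  · intro j hj; exact ZMod.val_cast_of_lt (Finset.mem_range.mp hj)
  · intro c _; rfl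

lemma dh_geom (ζ : ℂ) (n : ℕ) (h1 : ζ ≠ 1) (hn : ζ ^ n = 1) :
    ∑ j ∈ Finset.range n, ζ ^ j = 0 := by
  rw [geom_sum_eq h1, hn]; simp

lemma dh9_pow_eq {M : Type*} [Monoid M] {y : M} (hy : IsUnit y) {s s' : ℕ}
    (h : y ^ s = y ^ s') : s ≡ s' [MOD orderOf y] := by
  obtain ⟨u, rfl⟩ := hy
  rw [orderOf_units]
  have hu : u ^ s = u ^ s' := Units.ext (by simpa [Units.val_pow_eq_pow_val] using h)
  exact pow_eq_pow_iff_modEq.mp hu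

lemma dh9_unit_sum (p k : ℕ) (hp : Nat.Prime p) (hp3 : 3 ≤ p) (g : ZMod p)
    (hg : orderOf g = p - 1) (hk1 : 1 ≤ k) (hk2 : k ≤ p - 1)
    (ζ : ℂ) (hζp : ζ ^ p = 1) (hζ1 : ζ ≠ 1) :
    ∑ s ∈ Finset.range (p-1), ζ ^ (((k : ZMod p) * g ^ (s+1)).val) = -1 := by
  haveI := Fact.mk hp
  have hgpow : g ^ (p-1) = 1 := by rw [← hg]; exact pow_orderOf_eq_one g
  have hg0 : g ≠ 0 := by
    rintro rfl
    rw [zero_pow (by omega : p - 1 ≠ 0)] at hgpow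
    exact one_ne_zero hgpow.symm
  have hk0 : (k : ZMod p) ≠ 0 := by
    intro h
    have hdvd := (ZMod.natCast_eq_zero_iff k p).mp h
    have := Nat.le_of_dvd (by omega) hdvd
    omega
  set ψ : ℕ → ZMod p := fun s => (k : ZMod p) * g ^ (s+1) with hψ
  have hinj : Set.InjOn ψ (Finset.range (p-1) : Finset ℕ) := by
    intro s hs s' hs' h
    simp only [Finset.coe_range, Set.mem_Iio] at hs hs'
    have h2 : g ^ (s+1) = g ^ (s'+1) := mul_left_cancel₀ hk0 h
    have hmod := dh9_pow_eq (isUnit_iff_ne_zero.mpr hg0) h2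
    rw [hg] at hmod
    rcases le_total s s' with hle | hle
    · have hd := (Nat.modEq_iff_dvd' (by omega)).mp hmod
      rcases Nat.eq_zero_or_pos (s' + 1 - (s + 1)) with h0 | hpos
      · omega
      · have := Nat.le_of_dvd hpos hd; omega
    · have hd := (Nat.modEq_iff_dvd' (by omega)).mp hmod.symm
      rcases Nat.eq_zero_or_pos (s + 1 - (s' + 1)) with h0 | hpos
      · omega
      · have := Nat.le_of_dvd hpos hd; omega
  have hsub : (Finset.range (p-1)).image ψ ⊆ Finset.univ.erase (0 : ZMod p) := by
    intro c hc
    simp only [Finset.mem_image] at hc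
    obtain ⟨s, _, rfl⟩ := hc
    exact Finset.mem_erase.mpr ⟨mul_ne_zero hk0 (pow_ne_zero _ hg0), Finset.mem_univ _⟩
  have hcard : (Finset.univ.erase (0 : ZMod p)).card ≤ ((Finset.range (p-1)).image ψ).card := by
    rw [Finset.card_image_of_injOn hinj, Finset.card_range,
      Finset.card_erase_of_mem (Finset.mem_univ _), Finset.card_univ, ZMod.card]
  have himg : (Finset.range (p-1)).image ψ = Finset.univ.erase (0 : ZMod p) :=
    Finset.eq_of_subset_of_card_le hsub hcard
  have hsum0 : ∑ c : ZMod p, ζ ^ c.val = 0 := by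
    rw [dh_sum_zmod (fun j => ζ ^ j)]
    exact dh_geom ζ p hζ1 hζp
  have herase : ∑ c ∈ Finset.univ.erase (0 : ZMod p), ζ ^ c.val = -1 := by
    have h := Finset.add_sum_erase Finset.univ (fun c : ZMod p => ζ ^ c.val) (Finset.mem_univ 0)
    rw [hsum0] at h
    simp only [ZMod.val_zero, pow_zero] at h
    linear_combination h
  calc ∑ s ∈ Finset.range (p-1), ζ ^ ((ψ s).val)
      = ∑ c ∈ (Finset.range (p-1)).image ψ, ζ ^ c.val :=
        (Finset.sum_image (f := fun c : ZMod p => ζ ^ c.val) (fun s hs s' hs' h =>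
          hinj (Finset.mem_coe.mpr hs) (Finset.mem_coe.mpr hs') h)).symm
    _ = -1 := by rw [himg]; exact herase

lemma dh9_inj (p q g x : ℕ) (hp : Nat.Prime p) (hq : Nat.Prime q)
    (hpo : Odd p) (hqo : Odd q) (hpq : p < q)
    (hgcd : Nat.gcd (p - 1) (q - 1) = 2)
    (hgp : orderOf (g : ZMod p) = p - 1) (hgq : orderOf (g : ZMod q) = q - 1)
    (hxp : (x : ZMod p) = (g : ZMod p)) (hxq : (x : ZMod q) = 1) :
    ∀ t i t' i', t < (p-1)*(q-1)/4 → i < 2 → t' < (p-1)*(q-1)/4 → i' < 2 →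
      (g : ZMod (p*q)) ^ (2*t) * (x : ZMod (p*q)) ^ i
        = (g : ZMod (p*q)) ^ (2*t') * (x : ZMod (p*q)) ^ i' →
      t = t' ∧ i = i' := by
  intro t i t' i' ht hi ht' hi' h
  haveI := Fact.mk hp
  haveI := Fact.mk hq
  obtain ⟨α, hα⟩ := id hpo
  obtain ⟨β, hβ⟩ := id hqo
  have hp3 : 3 ≤ p := by have := hp.two_le; omega
  have hα1 : 1 ≤ α := by omega
  have hβ1 : 1 ≤ β := by omega
  have hugp : IsUnit (g : ZMod p) := by
    have : orderOf (g : ZMod p) ≠ 0 := by rw [hgp]; omega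
    exact (orderOf_pos_iff.mp (Nat.pos_of_ne_zero this)).isUnit
  have hugq : IsUnit (g : ZMod q) := by
    have : orderOf (g : ZMod q) ≠ 0 := by rw [hgq]; omega
    exact (orderOf_pos_iff.mp (Nat.pos_of_ne_zero this)).isUnit
  have hq' : (g : ZMod q) ^ (2*t) = (g : ZMod q) ^ (2*t') := by
    have := congrArg (ZMod.castHom (Dvd.intro_left p rfl) (ZMod q)) h
    simpa [map_mul, map_pow, map_natCast, hxq] using this
  have hmodq : 2*t ≡ 2*t' [MOD q-1] := by
    have := dh9_pow_eq hugq hq'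
    rwa [hgq] at this
  have htq : t ≡ t' [MOD β] := by
    have h2 : Nat.gcd (q-1) 2 = 2 := by
      rw [Nat.gcd_comm]
      exact Nat.gcd_eq_left ⟨β, by omega⟩
    have := Nat.ModEq.cancel_left_div_gcd (by omega : 0 < q-1) hmodq
    rwa [h2, show (q-1)/2 = β by omega] at this
  have hp' : (g : ZMod p) ^ (2*t+i) = (g : ZMod p) ^ (2*t'+i') := by
    have := congrArg (ZMod.castHom (Dvd.intro q rfl) (ZMod p)) h
    simp only [map_mul, map_pow, map_natCast, hxp] at this
    rwa [← pow_add, ← pow_add] at this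
  have hmodp : 2*t+i ≡ 2*t'+i' [MOD p-1] := by
    have := dh9_pow_eq hugp hp'
    rwa [hgp] at this
  have hii : i = i' := by
    have h2 := Nat.ModEq.of_dvd (⟨α, by omega⟩ : (2:ℕ) ∣ p-1) hmodp
    unfold Nat.ModEq at h2
    omega
  subst hii
  have hmodp2 : 2*t ≡ 2*t' [MOD p-1] := Nat.ModEq.add_right_cancel' i hmodp
  have htp : t ≡ t' [MOD α] := by
    have h2 : Nat.gcd (p-1) 2 = 2 := by
      rw [Nat.gcd_comm]
      exact Nat.gcd_eq_left ⟨α, by omega⟩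
    have := Nat.ModEq.cancel_left_div_gcd (by omega : 0 < p-1) hmodp2
    rwa [h2, show (p-1)/2 = α by omega] at this
  have hcop : Nat.Coprime α β := by
    have h4 : Nat.gcd (2*α) (2*β) = 2 * Nat.gcd α β := Nat.gcd_mul_left 2 α β
    have : Nat.gcd (2*α) (2*β) = 2 := by
      rw [show 2*α = p-1 by omega, show 2*β = q-1 by omega]; exact hgcd
    unfold Nat.Coprime
    omega
  have htt : t ≡ t' [MOD α*β] :=
    (Nat.modEq_and_modEq_iff_modEq_mul hcop).mp ⟨htp, htq⟩
  have hE : (p-1)*(q-1)/4 = α*β := by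
    rw [show p-1 = 2*α by omega, show q-1 = 2*β by omega,
      show 2*α*(2*β) = 4*(α*β) by ring]
    exact Nat.mul_div_cancel_left _ (by norm_num)
  rw [hE] at ht ht'
  have : t % (α*β) = t' % (α*β) := htt
  rw [Nat.mod_eq_of_lt ht, Nat.mod_eq_of_lt ht'] at this
  exact ⟨this, rfl⟩

end DH9Aux


/-- `ξ_N = exp(2πi/N)`, a primitive `N`-th root of unity. -/
noncomputable def DHxi (N : ℕ) : ℂ := Complex.exp (2 * Real.pi * Complex.I / N)

/-- Gauss period: `Σ_{a ∈ D} ξ_N^a`. -/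
noncomputable def DHeta (N : ℕ) (D : Finset (ZMod N)) : ℂ := ∑ a ∈ D, DHxi N ^ a.val

/-- Ding–Helleseth generalized cyclotomic class
`D₀ = {g^(2t) x^i : 0 ≤ t ≤ e/2 - 1, i ∈ {0,1}}` in `ZMod (p*q)`, where `e = (p-1)(q-1)/2`. -/
def DHD0 (p q g x : ℕ) : Finset (ZMod (p * q)) :=
  (Finset.range ((p - 1) * (q - 1) / 4) ×ˢ Finset.range 2).image
    (fun ti => (g : ZMod (p * q)) ^ (2 * ti.1) * (x : ZMod (p * q)) ^ ti.2)

/-- `D₁ = g · D₀`. -/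
def DHD1 (p q g x : ℕ) : Finset (ZMod (p * q)) :=
  (DHD0 p q g x).image (fun d => (g : ZMod (p * q)) * d)

/-- `P = {p, 2p, …, (q-1)p}` as a subset of `ZMod (p*q)`. -/
def DHP (p q : ℕ) : Finset (ZMod (p * q)) :=
  (Finset.Icc 1 (q - 1)).image (fun k => ((k * p : ℕ) : ZMod (p * q)))

/-- `Q = {q, 2q, …, (p-1)q}` as a subset of `ZMod (p*q)`. -/
def DHQ (p q : ℕ) : Finset (ZMod (p * q)) :=
  (Finset.Icc 1 (p - 1)).image (fun k => ((k * q : ℕ) : ZMod (p * q)))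

/-- First Ding–Helleseth sequence: `s_i = 1` iff `i mod N ∈ D₁ ∪ P`. -/
def DHs1 (p q g x : ℕ) (i : ℕ) : ℕ :=
  if (i : ZMod (p * q)) ∈ DHD1 p q g x ∪ DHP p q then 1 else 0

/-- Second Ding–Helleseth sequence: `s_i = 1` iff `i mod N ∈ D₁ ∪ Q`. -/
def DHs2 (p q g x : ℕ) (i : ℕ) : ℕ :=
  if (i : ZMod (p * q)) ∈ DHD1 p q g x ∪ DHQ p q then 1 else 0

/-- Circulant matrix of the first sequence: `a_{i,j} = s_{(i-j) mod N}`. -/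
noncomputable def DHA1 (p q g x : ℕ) : Matrix (Fin (p * q)) (Fin (p * q)) ℂ :=
  fun i j => (DHs1 p q g x ((((i : ℕ) : ZMod (p * q)) - ((j : ℕ) : ZMod (p * q))).val) : ℂ)

/-- Circulant matrix of the second sequence: `a_{i,j} = s_{(i-j) mod N}`. -/
noncomputable def DHA2 (p q g x : ℕ) : Matrix (Fin (p * q)) (Fin (p * q)) ℂ :=
  fun i j => (DHs2 p q g x ((((i : ℕ) : ZMod (p * q)) - ((j : ℕ) : ZMod (p * q))).val) : ℂ)

/-- `S(z) = Σ_{i=0}^{N-1} s_i z^i` for the first sequence. -/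
noncomputable def DHSval1 (p q g x : ℕ) (z : ℂ) : ℂ :=
  ∑ i ∈ Finset.range (p * q), (DHs1 p q g x i : ℂ) * z ^ i

/-- `S(z) = Σ_{i=0}^{N-1} s_i z^i` for the second sequence. -/
noncomputable def DHSval2 (p q g x : ℕ) (z : ℂ) : ℂ :=
  ∑ i ∈ Finset.range (p * q), (DHs2 p q g x i : ℂ) * z ^ i

/-- `S(2) = Σ_{i=0}^{N-1} s_i 2^i` for the first sequence, as a natural number. -/
def DHS2num1 (p q g x : ℕ) : ℕ := ∑ i ∈ Finset.range (p * q), DHs1 p q g x i * 2 ^ i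

/-- `S(2) = Σ_{i=0}^{N-1} s_i 2^i` for the second sequence, as a natural number. -/
def DHS2num2 (p q g x : ℕ) : ℕ := ∑ i ∈ Finset.range (p * q), DHs2 p q g x i * 2 ^ i

/-- Nonzero quadratic residues modulo `q`. -/
def DHQR (q : ℕ) [NeZero q] : Finset (ZMod q) :=
  Finset.univ.filter (fun a => a ≠ 0 ∧ ∃ b : ZMod q, b * b = a)

/-- Quadratic nonresidues modulo `q`. -/
def DHQNR (q : ℕ) [NeZero q] : Finset (ZMod q) :=
  Finset.univ.filter (fun a => a ≠ 0 ∧ ¬∃ b : ZMod q, b * b = a)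

theorem stmt9 (p q g x : ℕ) (hp : Nat.Prime p) (hq : Nat.Prime q)
    (hpo : Odd p) (hqo : Odd q) (hpq : p < q)
    (hgcd : Nat.gcd (p - 1) (q - 1) = 2)
    (hgp : orderOf (g : ZMod p) = p - 1) (hgq : orderOf (g : ZMod q) = q - 1)
    (hxp : (x : ZMod p) = (g : ZMod p)) (hxq : (x : ZMod q) = 1) :
    ∀ a ∈ DHQ p q, DHSval1 p q g x (DHxi (p * q) ^ a.val) = ((q : ℂ) - 1) / 2 := by
  intro a ha
  haveI := Fact.mk hp
  haveI := Fact.mk hq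
  obtain ⟨α, hα⟩ := id hpo
  obtain ⟨β, hβ⟩ := id hqo
  have hp3 : 3 ≤ p := by have := hp.two_le; omega
  have hq3 : 3 ≤ q := by have := hq.two_le; omega
  have hNpos : 0 < p * q := Nat.mul_pos (by omega) (by omega)
  haveI : NeZero (p*q) := ⟨hNpos.ne'⟩
  simp only [DHQ, Finset.mem_image, Finset.mem_Icc] at ha
  obtain ⟨k, ⟨hk1, hk2⟩, rfl⟩ := ha
  have hkq : k * q < p * q := by
    have h1 : k < p := by omega
    exact mul_lt_mul_of_pos_right h1 (by omega)
  have haval : ((k*q : ℕ) : ZMod (p*q)).val = k * q := ZMod.val_cast_of_lt hkq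
  -- primitive roots
  have hξ : IsPrimitiveRoot (DHxi (p*q)) (p*q) := by
    have := Complex.isPrimitiveRoot_exp (p*q) hNpos.ne'
    simpa [DHxi] using this
  set ζ : ℂ := DHxi (p*q) ^ q with hζdef
  have hζ : IsPrimitiveRoot ζ p := hξ.pow hNpos (mul_comm p q)
  have hζp : ζ ^ p = 1 := hζ.pow_eq_one
  have hζ1 : ζ ≠ 1 := hζ.ne_one (by omega)
  have hepnat : ∀ m : ℕ, ζ ^ m = ζ ^ ((m : ZMod p)).val := by
    intro m
    rw [ZMod.val_natCast]
    conv_lhs => rw [← Nat.mod_add_div m p]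
    rw [pow_add, pow_mul, hζp, one_pow, mul_one]
  have hzpow : ∀ m : ℕ,
      (DHxi (p*q) ^ (k*q)) ^ m = ζ ^ (((k : ZMod p) * (m : ZMod p)).val) := by
    intro m
    rw [← pow_mul, show k*q*m = q*(k*m) by ring, pow_mul, ← hζdef, hepnat (k*m),
      Nat.cast_mul]
  have hterm : ∀ G : ℕ, (DHxi (p*q) ^ (k*q)) ^ ((G : ZMod (p*q)).val)
      = ζ ^ (((k : ZMod p) * (G : ZMod p)).val) := by
    intro G
    rw [hzpow]
    congr 2
    rw [ZMod.val_natCast]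
    conv_rhs => rw [← Nat.mod_add_div G (p*q)]
    push_cast
    simp
  -- units
  have hugp : IsUnit (g : ZMod p) := by
    have : orderOf (g : ZMod p) ≠ 0 := by rw [hgp]; omega
    exact (orderOf_pos_iff.mp (Nat.pos_of_ne_zero this)).isUnit
  have hugq : IsUnit (g : ZMod q) := by
    have : orderOf (g : ZMod q) ≠ 0 := by rw [hgq]; omega
    exact (orderOf_pos_iff.mp (Nat.pos_of_ne_zero this)).isUnit
  have huxp : IsUnit (x : ZMod p) := hxp ▸ hugp
  have huxq : IsUnit (x : ZMod q) := hxq ▸ isUnit_one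
  have hugN : IsUnit (g : ZMod (p*q)) :=
    (ZMod.isUnit_iff_coprime g (p*q)).mpr
      (Nat.Coprime.mul_right ((ZMod.isUnit_iff_coprime g p).mp hugp)
        ((ZMod.isUnit_iff_coprime g q).mp hugq))
  -- disjointness
  have hdisj : Disjoint (DHD1 p q g x) (DHP p q) := by
    rw [Finset.disjoint_left]
    intro c hc hc'
    simp only [DHD1, DHD0, Finset.mem_image, Finset.mem_product, Finset.mem_range] at hc
    obtain ⟨d, ⟨⟨t, i⟩, _, rfl⟩, rfl⟩ := hc
    simp only [DHP, Finset.mem_image, Finset.mem_Icc] at hc'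
    obtain ⟨j, ⟨hj1, hj2⟩, hj⟩ := hc'
    have hcast := congrArg (ZMod.castHom (Dvd.intro q rfl) (ZMod p)) hj
    simp only [map_mul, map_pow, map_natCast, Nat.cast_mul] at hcast
    have h0 : (0 : ZMod p) = (g:ZMod p) * ((g:ZMod p)^(2*t) * (x:ZMod p)^i) := by
      rw [← hcast]
      simp [ZMod.natCast_self]
    exact (hugp.mul ((hugp.pow _).mul (huxp.pow _))).ne_zero h0.symm
  -- rewrite the sum
  rw [haval]
  simp only [DHSval1]
  have hmain : ∑ i ∈ Finset.range (p*q), ((DHs1 p q g x i : ℕ) : ℂ) * (DHxi (p*q) ^ (k*q)) ^ i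
      = ∑ c : ZMod (p*q), ((DHs1 p q g x c.val : ℕ) : ℂ) * (DHxi (p*q) ^ (k*q)) ^ c.val :=
    (dh_sum_zmod _).symm
  rw [hmain]
  simp only [DHs1, ZMod.natCast_zmod_val, Nat.cast_ite, Nat.cast_one, Nat.cast_zero,
    ite_mul, one_mul, zero_mul]
  rw [Finset.sum_ite_mem, Finset.univ_inter, Finset.sum_union hdisj]
  -- P-sum
  have hPinj : ∀ j ∈ Finset.Icc 1 (q-1), ∀ j' ∈ Finset.Icc 1 (q-1),
      ((j*p : ℕ) : ZMod (p*q)) = ((j'*p : ℕ) : ZMod (p*q)) → j = j' := by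
    intro j hj j' hj' hEq
    simp only [Finset.mem_Icc] at hj hj'
    have e1 : j * p < p * q := by
      calc j * p < q * p := mul_lt_mul_of_pos_right (by omega) (by omega)
        _ = p * q := mul_comm q p
    have e2 : j' * p < p * q := by
      calc j' * p < q * p := mul_lt_mul_of_pos_right (by omega) (by omega)
        _ = p * q := mul_comm q p
    have := congrArg ZMod.val hEq
    rw [ZMod.val_cast_of_lt e1, ZMod.val_cast_of_lt e2] at this
    exact Nat.eq_of_mul_eq_mul_right (by omega) this
  have hPsum : ∑ c ∈ DHP p q, (DHxi (p*q) ^ (k*q)) ^ c.val = ((q:ℂ) - 1) := by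
    rw [DHP, Finset.sum_image hPinj]
    have hone : ∀ j ∈ Finset.Icc 1 (q-1),
        (DHxi (p*q) ^ (k*q)) ^ (((j*p : ℕ) : ZMod (p*q)).val) = 1 := by
      intro j hj
      rw [hterm]
      have hz : ((j*p : ℕ) : ZMod p) = 0 := by
        push_cast
        simp [ZMod.natCast_self]
      rw [hz, mul_zero, ZMod.val_zero, pow_zero]
    rw [Finset.sum_congr rfl hone, Finset.sum_const, Nat.card_Icc]
    simp only [Nat.add_sub_cancel, nsmul_eq_mul, mul_one]
    rw [Nat.cast_sub (by omega), Nat.cast_one]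
  -- D1-sum
  have hgp1 : (g : ZMod p) ^ (p-1) = 1 := by rw [← hgp]; exact pow_orderOf_eq_one _
  have hD1 : ∑ c ∈ DHD1 p q g x, (DHxi (p*q) ^ (k*q)) ^ c.val = (β : ℂ) * (-1) := by
    rw [DHD1, Finset.sum_image (fun c _ c' _ hEq => hugN.mul_left_cancel hEq)]
    have hφinj : ∀ ti ∈ Finset.range ((p-1)*(q-1)/4) ×ˢ Finset.range 2,
        ∀ ti' ∈ Finset.range ((p-1)*(q-1)/4) ×ˢ Finset.range 2,
        (g : ZMod (p*q)) ^ (2*ti.1) * (x : ZMod (p*q)) ^ ti.2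
          = (g : ZMod (p*q)) ^ (2*ti'.1) * (x : ZMod (p*q)) ^ ti'.2 → ti = ti' := by
      intro ti hti ti' hti' hEq
      simp only [Finset.mem_product, Finset.mem_range] at hti hti'
      obtain ⟨h1, h2⟩ := dh9_inj p q g x hp hq hpo hqo hpq hgcd hgp hgq hxp hxq
        ti.1 ti.2 ti'.1 ti'.2 hti.1 hti.2 hti'.1 hti'.2 hEq
      exact Prod.ext h1 h2
    rw [DHD0, Finset.sum_image hφinj, Finset.sum_product]
    have htermD : ∀ t i : ℕ,
        (DHxi (p*q) ^ (k*q)) ^ (((g : ZMod (p*q)) * ((g : ZMod (p*q))^(2*t) * (x : ZMod (p*q))^i)).val)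
          = ζ ^ (((k : ZMod p) * (g : ZMod p)^(2*t+i+1)).val) := by
      intro t i
      have hcast : (g : ZMod (p*q)) * ((g : ZMod (p*q))^(2*t) * (x : ZMod (p*q))^i)
          = ((g * (g^(2*t) * x^i) : ℕ) : ZMod (p*q)) := by push_cast; ring
      rw [hcast, hterm]
      congr 2
      push_cast
      rw [hxp]
      ring
    have hstep : ∀ t ∈ Finset.range ((p-1)*(q-1)/4),
        (∑ i ∈ Finset.range 2, (DHxi (p*q) ^ (k*q)) ^
            (((g : ZMod (p*q)) * ((g : ZMod (p*q))^(2*t) * (x : ZMod (p*q))^i)).val))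
          = ((fun s => ζ ^ (((k : ZMod p) * (g : ZMod p)^(s+1)).val)) (2*t)
            + (fun s => ζ ^ (((k : ZMod p) * (g : ZMod p)^(s+1)).val)) (2*t+1)) := by
      intro t _
      rw [Finset.sum_range_succ, Finset.sum_range_one, htermD, htermD]
    rw [Finset.sum_congr rfl hstep,
      dh_sum_pair (fun s => ζ ^ (((k : ZMod p) * (g : ZMod p)^(s+1)).val))]
    have h2E : 2*((p-1)*(q-1)/4) = β*(p-1) := by
      have hE : (p-1)*(q-1)/4 = α*β := by
        rw [show p-1 = 2*α by omega, show q-1 = 2*β by omega,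
          show 2*α*(2*β) = 4*(α*β) by ring]
        exact Nat.mul_div_cancel_left _ (by norm_num)
      rw [hE, show p-1 = 2*α by omega]
      ring
    rw [h2E, dh_sum_periodic _ (p-1) β ?hper]
    case hper =>
      intro s
      rw [show s+(p-1)+1 = (s+1)+(p-1) by omega, pow_add, hgp1, mul_one]
    rw [dh9_unit_sum p k hp hp3 (g : ZMod p) hgp hk1 (by omega) ζ hζp hζ1]
  rw [hD1, hPsum]
  have hqc : (q : ℂ) = 2*(β:ℂ)+1 := by exact_mod_cast congrArg (Nat.cast : ℕ → ℂ) hβ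
  rw [hqc]
  ring
end

section
/- For the first Ding–Helleseth sequence, if a = pb ∈ P with b a nonzero quadratic residue modulo q, then S(ξ_N^a) = (p−1)·η₁^{(q)} − 1; if b is a quadratic nonresidue modulo q, then S(ξ_N^a) = (p−1)·η₀^{(q)} − 1. -/
open Finset

lemma DH_pow_mod (z : ℂ) {q : ℕ} (hz : z ^ q = 1) (n : ℕ) : z ^ (n % q) = z ^ n := by
  conv_rhs => rw [← Nat.div_add_mod n q]
  rw [pow_add, pow_mul, hz, one_pow, one_mul]

lemma DH_field_pow_modEq {F} [Field F] {g : F} (hg : g ≠ 0) {A B : ℕ}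
    (h : g ^ A = g ^ B) : A ≡ B [MOD orderOf g] := by
  have key : ∀ A c : ℕ, g ^ A = g ^ (A + c) → A ≡ A + c [MOD orderOf g] := by
    intro A c hac
    have h1 : (1 : F) = g ^ c :=
      mul_left_cancel₀ (pow_ne_zero A hg) (by rw [mul_one, ← pow_add]; exact hac)
    have hd := orderOf_dvd_of_pow_eq_one h1.symm
    exact (Nat.modEq_iff_dvd' (Nat.le_add_right A c)).mpr (by simpa using hd)
  rcases le_total A B with hle | hle
  · obtain ⟨c, rfl⟩ := Nat.exists_eq_add_of_le hle
    exact key A c h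
  · obtain ⟨c, rfl⟩ := Nat.exists_eq_add_of_le hle
    exact (key B c h.symm).symm

lemma DH_sum_periodic (h : ℕ → ℂ) (m : ℕ) (hper : ∀ t, h (t + m) = h t) (k : ℕ) :
    ∑ t ∈ range (k * m), h t = k * ∑ t ∈ range m, h t := by
  have hsh : ∀ k t, h (k * m + t) = h t := by
    intro k
    induction k with
    | zero => simp
    | succ n ih =>
      intro t
      have e : (n + 1) * m + t = (n * m + t) + m := by ring
      rw [e, hper, ih]
  induction k with
  | zero => simp
  | succ k ih =>
    have hmul : (k + 1) * m = k * m + m := by ring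
    rw [hmul, Finset.sum_range_add, ih, Finset.sum_congr rfl (fun t _ => hsh k t)]
    push_cast; ring

lemma DH_indicator_sum {N : ℕ} [NeZero N] (T : Finset (ZMod N)) (z : ℂ) :
    ∑ i ∈ range N, (if ((i : ℕ) : ZMod N) ∈ T then (1:ℂ) else 0) * z ^ i
      = ∑ a ∈ T, z ^ a.val := by
  have h1 : ∀ i ∈ range N,
      (if ((i : ℕ) : ZMod N) ∈ T then (1:ℂ) else 0) * z ^ i
        = if ((i : ℕ) : ZMod N) ∈ T then z ^ i else 0 := by
    intros; split <;> simp
  rw [Finset.sum_congr rfl h1, ← Finset.sum_filter]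
  refine Finset.sum_nbij' (fun i => ((i : ℕ) : ZMod N)) (fun a => a.val) ?_ ?_ ?_ ?_ ?_
  · intro i hi; exact (Finset.mem_filter.mp hi).2
  · intro a ha
    simp only [Finset.mem_filter, Finset.mem_range]
    refine ⟨ZMod.val_lt a, ?_⟩
    simpa using ha
  · intro i hi
    have := Finset.mem_range.mp (Finset.mem_filter.mp hi).1
    simp [ZMod.val_natCast, Nat.mod_eq_of_lt this]
  · intro a _; simp
  · intro i hi
    have := Finset.mem_range.mp (Finset.mem_filter.mp hi).1
    simp [ZMod.val_natCast, Nat.mod_eq_of_lt this]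

theorem stmt10 (p q g x : ℕ) [NeZero q] (hp : Nat.Prime p) (hq : Nat.Prime q)
    (hpo : Odd p) (hqo : Odd q) (hpq : p < q)
    (hgcd : Nat.gcd (p - 1) (q - 1) = 2)
    (hgp : orderOf (g : ZMod p) = p - 1) (hgq : orderOf (g : ZMod q) = q - 1)
    (hxp : (x : ZMod p) = (g : ZMod p)) (hxq : (x : ZMod q) = 1) :
    ∀ b : ℕ,
      ((b : ZMod q) ∈ DHQR q →
        DHSval1 p q g x (DHxi (p * q) ^ (p * b)) =
          ((p : ℂ) - 1) * DHeta q (DHQNR q) - 1) ∧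
      ((b : ZMod q) ∈ DHQNR q →
        DHSval1 p q g x (DHxi (p * q) ^ (p * b)) =
          ((p : ℂ) - 1) * DHeta q (DHQR q) - 1) := by
  intro b
  haveI : Fact p.Prime := ⟨hp⟩
  haveI : Fact q.Prime := ⟨hq⟩
  haveI : NeZero (p * q) := ⟨Nat.mul_ne_zero hp.pos.ne' hq.pos.ne'⟩
  have hp3 : 3 ≤ p := by
    rcases hpo with ⟨r, hr⟩
    have := hp.two_le; omega
  have hq3 : 3 ≤ q := by
    rcases hqo with ⟨r, hr⟩
    have := hq.two_le; omega
  obtain ⟨a, hp2⟩ : ∃ a, p - 1 = 2 * a := by rcases hpo with ⟨r, hr⟩; exact ⟨r, by omega⟩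
  obtain ⟨m, hq2⟩ : ∃ m, q - 1 = 2 * m := by rcases hqo with ⟨r, hr⟩; exact ⟨r, by omega⟩
  have ha1 : 1 ≤ a := by omega
  have hm1 : 1 ≤ m := by omega
  have hcop : Nat.Coprime a m := by
    have h2 : Nat.gcd (2 * a) (2 * m) = 2 * Nat.gcd a m := Nat.gcd_mul_left 2 a m
    have : Nat.gcd (p - 1) (q - 1) = 2 * Nat.gcd a m := by rw [hp2, hq2]; exact h2
    rw [hgcd] at this
    unfold Nat.Coprime
    omega
  -- roots of unity
  have hprim : IsPrimitiveRoot (DHxi q) q := Complex.isPrimitiveRoot_exp q (by omega)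
  have hζq : DHxi q ^ q = 1 := hprim.pow_eq_one
  have hxiN : DHxi (p * q) ^ (p * q) = 1 :=
    (Complex.isPrimitiveRoot_exp (p * q) (NeZero.ne _)).pow_eq_one
  have hNp : DHxi (p * q) ^ p = DHxi q := by
    rw [DHxi, DHxi, ← Complex.exp_nat_mul]
    congr 1
    have hq0 : (q : ℂ) ≠ 0 := by exact_mod_cast hq.pos.ne'
    have hp0 : (p : ℂ) ≠ 0 := by exact_mod_cast hp.pos.ne'
    push_cast
    field_simp
  have hwN : (DHxi (p * q) ^ (p * b)) ^ (p * q) = 1 := by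
    rw [← pow_mul, show p * b * (p * q) = p * q * (p * b) by ring, pow_mul, hxiN, one_pow]
  have hw : ∀ n : ℕ, (DHxi (p * q) ^ (p * b)) ^ n = DHxi q ^ (b * n) := by
    intro n
    rw [← pow_mul, show p * b * n = p * (b * n) by ring, pow_mul, hNp]
  set G : ZMod q → ℂ := fun c => DHxi q ^ c.val with hGdef
  have hG : ∀ n : ℕ, DHxi q ^ n = G ((n : ZMod q)) := by
    intro n
    show _ = DHxi q ^ (n : ZMod q).val
    rw [ZMod.val_natCast, DH_pow_mod _ hζq]
  -- generators nonzero
  have hgq0 : (g : ZMod q) ≠ 0 := by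
    intro h0
    have h1 : (g : ZMod q) ^ (q - 1) = 1 := by rw [← hgq]; exact pow_orderOf_eq_one _
    rw [h0, zero_pow (by omega)] at h1
    exact zero_ne_one h1
  have hgp0 : (g : ZMod p) ≠ 0 := by
    intro h0
    have h1 : (g : ZMod p) ^ (p - 1) = 1 := by rw [← hgp]; exact pow_orderOf_eq_one _
    rw [h0, zero_pow (by omega)] at h1
    exact zero_ne_one h1
  have hgq1 : (g : ZMod q) ^ (2 * m) = 1 := by
    rw [← hq2, ← hgq]; exact pow_orderOf_eq_one _
  -- parity of powers vs squares
  have hOddNotSq : ∀ n : ℕ, Odd n → ¬∃ c : ZMod q, c * c = (g : ZMod q) ^ n := by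
    rintro n hn ⟨c, hc⟩
    have hc0 : c ≠ 0 := by
      intro h0; rw [h0, mul_zero] at hc
      exact pow_ne_zero n hgq0 hc.symm
    have h1 : (g : ZMod q) ^ (n * m) = 1 := by
      rw [pow_mul, ← hc, show (c * c) ^ m = c ^ (2 * m) by ring, ← hq2]
      exact ZMod.pow_card_sub_one_eq_one hc0
    have hd : q - 1 ∣ n * m := by rw [← hgq]; exact orderOf_dvd_of_pow_eq_one h1
    rw [hq2] at hd
    obtain ⟨k, hk⟩ := hd
    have hnk : n = 2 * k := by
      have h2 : n * m = (2 * k) * m := by rw [hk]; ring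
      exact Nat.eq_of_mul_eq_mul_right (by omega) h2
    rcases hn with ⟨r, hr⟩
    omega
  have hEvenSq : ∀ n : ℕ, Even n → ∃ c : ZMod q, c * c = (g : ZMod q) ^ n := by
    rintro n ⟨r, rfl⟩
    exact ⟨(g : ZMod q) ^ r, by rw [← pow_add]⟩
  have hQRpow : ∀ n : ℕ, (g : ZMod q) ^ n ∈ DHQR q ↔ Even n := by
    intro n
    simp only [DHQR, Finset.mem_filter, Finset.mem_univ, true_and]
    constructor
    · rintro ⟨-, hsq⟩
      rcases Nat.even_or_odd n with he | ho
      · exact he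
      · exact absurd hsq (hOddNotSq n ho)
    · intro he
      exact ⟨pow_ne_zero n hgq0, hEvenSq n he⟩
  have hQNRpow : ∀ n : ℕ, (g : ZMod q) ^ n ∈ DHQNR q ↔ Odd n := by
    intro n
    simp only [DHQNR, Finset.mem_filter, Finset.mem_univ, true_and]
    constructor
    · rintro ⟨-, hsq⟩
      rcases Nat.even_or_odd n with he | ho
      · exact absurd (hEvenSq n he) hsq
      · exact ho
    · intro ho
      exact ⟨pow_ne_zero n hgq0, hOddNotSq n ho⟩
  -- coverage
  have hmodq : ∀ {A B : ℕ}, (g : ZMod q) ^ A = (g : ZMod q) ^ B → A ≡ B [MOD 2 * m] := by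
    intro A B h
    have := DH_field_pow_modEq hgq0 h
    rwa [hgq, hq2] at this
  have hcover : ∀ c : ZMod q, c ≠ 0 → ∃ n, n < 2 * m ∧ (g : ZMod q) ^ n = c := by
    intro c hc0
    set S := (range (2 * m)).image (fun n => (g : ZMod q) ^ n) with hS
    have hinj : Set.InjOn (fun n => (g : ZMod q) ^ n) (range (2 * m)) := by
      intro n₁ h₁ n₂ h₂ he
      have hmm := hmodq he
      have e₁ := Nat.mod_eq_of_lt (Finset.mem_range.mp h₁)
      have e₂ := Nat.mod_eq_of_lt (Finset.mem_range.mp h₂)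
      unfold Nat.ModEq at hmm
      omega
    have hcardS : S.card = 2 * m := by
      rw [hS, Finset.card_image_of_injOn hinj, card_range]
    have hsub : S ⊆ Finset.univ.filter (fun c : ZMod q => c ≠ 0) := by
      intro c hc
      obtain ⟨n, -, rfl⟩ := Finset.mem_image.mp hc
      simp [pow_ne_zero n hgq0]
    have hcardT : (Finset.univ.filter (fun c : ZMod q => c ≠ 0)).card = 2 * m := by
      rw [Finset.filter_ne', Finset.card_erase_of_mem (Finset.mem_univ _),
        Finset.card_univ, ZMod.card]
      omega
    have heq : S = Finset.univ.filter (fun c : ZMod q => c ≠ 0) :=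
      Finset.eq_of_subset_of_card_le hsub (by rw [hcardS, hcardT])
    have hcS : c ∈ S := by rw [heq]; simp [hc0]
    obtain ⟨n, hn, he⟩ := Finset.mem_image.mp hcS
    exact ⟨n, Finset.mem_range.mp hn, he⟩
  -- descriptions
  have hQNRdesc : DHQNR q = (range m).image (fun t => (g : ZMod q) ^ (2 * t + 1)) := by
    ext c
    constructor
    · intro hc
      have hc0 : c ≠ 0 := by
        simp only [DHQNR, Finset.mem_filter] at hc; exact hc.2.1
      obtain ⟨n, hn, rfl⟩ := hcover c hc0
      obtain ⟨t, rfl⟩ := (hQNRpow n).mp hc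
      exact Finset.mem_image.mpr ⟨t, Finset.mem_range.mpr (by omega), rfl⟩
    · intro hc
      obtain ⟨t, -, rfl⟩ := Finset.mem_image.mp hc
      exact (hQNRpow _).mpr ⟨t, by ring⟩
  have hQRdesc : DHQR q = (range m).image (fun t => (g : ZMod q) ^ (2 * t)) := by
    ext c
    constructor
    · intro hc
      have hc0 : c ≠ 0 := by
        simp only [DHQR, Finset.mem_filter] at hc; exact hc.2.1
      obtain ⟨n, hn, rfl⟩ := hcover c hc0
      obtain ⟨t, ht⟩ := (hQRpow n).mp hc
      refine Finset.mem_image.mpr ⟨t, Finset.mem_range.mpr (by omega), ?_⟩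
      congr 1; omega
    · intro hc
      obtain ⟨t, -, rfl⟩ := Finset.mem_image.mp hc
      exact (hQRpow _).mpr ⟨t, by ring⟩
  have hinjQNR : ∀ t₁ ∈ range m, ∀ t₂ ∈ range m,
      (g : ZMod q) ^ (2 * t₁ + 1) = (g : ZMod q) ^ (2 * t₂ + 1) → t₁ = t₂ := by
    intro t₁ h₁ t₂ h₂ he
    have hmm := hmodq he
    have b₁ := Finset.mem_range.mp h₁
    have b₂ := Finset.mem_range.mp h₂
    have e₁ := Nat.mod_eq_of_lt (show 2 * t₁ + 1 < 2 * m by omega)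
    have e₂ := Nat.mod_eq_of_lt (show 2 * t₂ + 1 < 2 * m by omega)
    unfold Nat.ModEq at hmm
    omega
  have hinjQR : ∀ t₁ ∈ range m, ∀ t₂ ∈ range m,
      (g : ZMod q) ^ (2 * t₁) = (g : ZMod q) ^ (2 * t₂) → t₁ = t₂ := by
    intro t₁ h₁ t₂ h₂ he
    have hmm := hmodq he
    have b₁ := Finset.mem_range.mp h₁
    have b₂ := Finset.mem_range.mp h₂
    have e₁ := Nat.mod_eq_of_lt (show 2 * t₁ < 2 * m by omega)
    have e₂ := Nat.mod_eq_of_lt (show 2 * t₂ < 2 * m by omega)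
    unfold Nat.ModEq at hmm
    omega
  have hcardQNR : (DHQNR q).card = m := by
    rw [hQNRdesc, Finset.card_image_of_injOn (fun t₁ h₁ t₂ h₂ he => hinjQNR t₁ h₁ t₂ h₂ he),
      card_range]
  have hcardQR : (DHQR q).card = m := by
    rw [hQRdesc, Finset.card_image_of_injOn (fun t₁ h₁ t₂ h₂ he => hinjQR t₁ h₁ t₂ h₂ he),
      card_range]
  -- main computation
  have main : ∀ T : Finset (ZMod q), (b : ZMod q) ≠ 0 →
      (DHQNR q).image (fun c => (b : ZMod q) * c) = T →
      DHSval1 p q g x (DHxi (p * q) ^ (p * b)) = ((p : ℂ) - 1) * DHeta q T - 1 := by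
    intro T hb0 hT
    -- Step 1: indicator sum
    have e1 : DHSval1 p q g x (DHxi (p * q) ^ (p * b))
        = ∑ aa ∈ DHD1 p q g x ∪ DHP p q, (DHxi (p * q) ^ (p * b)) ^ aa.val := by
      rw [DHSval1, ← DH_indicator_sum]
      refine Finset.sum_congr rfl fun i _ => ?_
      simp [DHs1, apply_ite (fun n : ℕ => (n : ℂ))]
    -- disjointness
    have hdisj : Disjoint (DHD1 p q g x) (DHP p q) := by
      rw [Finset.disjoint_left]
      intro aa h1 h2
      obtain ⟨d, hd, rfl⟩ := Finset.mem_image.mp h1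
      obtain ⟨ti, hti, rfl⟩ := Finset.mem_image.mp hd
      obtain ⟨k, hk, hke⟩ := Finset.mem_image.mp h2
      have := congrArg (ZMod.castHom (dvd_mul_right p q) (ZMod p)) hke.symm
      simp only [map_mul, map_pow, map_natCast] at this
      rw [hxp] at this
      have hlhs : (g : ZMod p) * ((g : ZMod p) ^ (2 * ti.1) * (g : ZMod p) ^ ti.2) ≠ 0 :=
        mul_ne_zero hgp0 (mul_ne_zero (pow_ne_zero _ hgp0) (pow_ne_zero _ hgp0))
      apply hlhs
      rw [this]
      push_cast
      simp [ZMod.natCast_self]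
    have e2 : ∑ aa ∈ DHD1 p q g x ∪ DHP p q, (DHxi (p * q) ^ (p * b)) ^ aa.val
        = (∑ aa ∈ DHD1 p q g x, (DHxi (p * q) ^ (p * b)) ^ aa.val)
          + ∑ aa ∈ DHP p q, (DHxi (p * q) ^ (p * b)) ^ aa.val :=
      Finset.sum_union hdisj
    -- P sum
    have eP : ∑ aa ∈ DHP p q, (DHxi (p * q) ^ (p * b)) ^ aa.val = -1 := by
      have hPinj : ∀ k₁ ∈ Finset.Icc 1 (q - 1), ∀ k₂ ∈ Finset.Icc 1 (q - 1),
          ((k₁ * p : ℕ) : ZMod (p * q)) = ((k₂ * p : ℕ) : ZMod (p * q)) → k₁ = k₂ := by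
        intro k₁ h₁ k₂ h₂ he
        have b₁ := Finset.mem_Icc.mp h₁
        have b₂ := Finset.mem_Icc.mp h₂
        have hv := congrArg ZMod.val he
        rw [ZMod.val_natCast, ZMod.val_natCast] at hv
        have l₁ : k₁ * p < p * q := by
          calc k₁ * p ≤ (q - 1) * p := Nat.mul_le_mul_right p b₁.2
          _ < q * p := (Nat.mul_lt_mul_right hp.pos).mpr (by omega)
          _ = p * q := mul_comm q p
        have l₂ : k₂ * p < p * q := by
          calc k₂ * p ≤ (q - 1) * p := Nat.mul_le_mul_right p b₂.2
          _ < q * p := (Nat.mul_lt_mul_right hp.pos).mpr (by omega)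
          _ = p * q := mul_comm q p
        rw [Nat.mod_eq_of_lt l₁, Nat.mod_eq_of_lt l₂] at hv
        exact Nat.eq_of_mul_eq_mul_right hp.pos hv
      rw [DHP, Finset.sum_image hPinj]
      have hterm : ∀ k : ℕ, (DHxi (p * q) ^ (p * b)) ^ ((k * p : ℕ) : ZMod (p * q)).val
          = (DHxi q ^ (b * p)) ^ k := by
        intro k
        rw [ZMod.val_natCast, DH_pow_mod _ hwN, hw, ← pow_mul]
        congr 1; ring
      rw [Finset.sum_congr rfl (fun k _ => hterm k)]
      set v : ℂ := DHxi q ^ (b * p) with hv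
      have hv1 : v ≠ 1 := by
        intro h1
        have := (hprim.pow_eq_one_iff_dvd (b * p)).mp h1
        rcases (Nat.Prime.dvd_mul hq).mp this with hdb | hdp
        · exact hb0 ((ZMod.natCast_eq_zero_iff b q).mpr hdb)
        · exact absurd (Nat.le_of_dvd hp.pos hdp) (by omega)
      have hvq : v ^ q = 1 := by
        rw [hv, ← pow_mul, mul_comm, pow_mul, hζq, one_pow]
      have hgeom : ∑ k ∈ range q, v ^ k = 0 := by
        rw [geom_sum_eq hv1, hvq]
        simp
      have hr : range q = insert 0 (Finset.Icc 1 (q - 1)) := by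
        ext k
        simp only [Finset.mem_range, Finset.mem_insert, Finset.mem_Icc]
        omega
      have h0 : (0 : ℕ) ∉ Finset.Icc 1 (q - 1) := by simp
      rw [hr, Finset.sum_insert h0, pow_zero] at hgeom
      linear_combination hgeom
    -- D1 sum
    have he4 : (p - 1) * (q - 1) / 4 = a * m := by
      rw [hp2, hq2, show 2 * a * (2 * m) = 4 * (a * m) by ring]
      exact Nat.mul_div_cancel_left _ (by norm_num)
    have hD1eq : DHD1 p q g x = ((range (a * m)) ×ˢ range 2).image
        (fun ti => (g : ZMod (p * q)) ^ (2 * ti.1 + 1) * (x : ZMod (p * q)) ^ ti.2) := by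
      rw [DHD1, DHD0, he4, Finset.image_image]
      apply Finset.image_congr
      intro ti _
      simp only [Function.comp_apply]
      ring
    have hD1inj : ∀ ti ∈ (range (a * m)) ×ˢ range 2, ∀ tj ∈ (range (a * m)) ×ˢ range 2,
        (g : ZMod (p * q)) ^ (2 * ti.1 + 1) * (x : ZMod (p * q)) ^ ti.2
          = (g : ZMod (p * q)) ^ (2 * tj.1 + 1) * (x : ZMod (p * q)) ^ tj.2 → ti = tj := by
      rintro ⟨t₁, i₁⟩ h₁ ⟨t₂, i₂⟩ h₂ he
      simp only [Finset.mem_product, Finset.mem_range] at h₁ h₂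
      -- mod q
      have heq : (g : ZMod q) ^ (2 * t₁ + 1) = (g : ZMod q) ^ (2 * t₂ + 1) := by
        have := congrArg (ZMod.castHom (dvd_mul_left q p) (ZMod q)) he
        simp only [map_mul, map_pow, map_natCast] at this
        rwa [hxq, one_pow, one_pow, mul_one, mul_one] at this
      -- mod p
      have hep : (g : ZMod p) ^ (2 * t₁ + 1 + i₁) = (g : ZMod p) ^ (2 * t₂ + 1 + i₂) := by
        have := congrArg (ZMod.castHom (dvd_mul_right p q) (ZMod p)) he
        simp only [map_mul, map_pow, map_natCast] at this
        rw [hxp] at this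
        rw [← pow_add, ← pow_add] at this
        exact this
      have hmq : 2 * t₁ + 1 ≡ 2 * t₂ + 1 [MOD 2 * m] := hmodq heq
      have hmp : 2 * t₁ + 1 + i₁ ≡ 2 * t₂ + 1 + i₂ [MOD 2 * a] := by
        have := DH_field_pow_modEq hgp0 hep
        rwa [hgp, hp2] at this
      have hdq : (2 * m : ℤ) ∣ (2 * t₂ + 1 : ℤ) - (2 * t₁ + 1) := by
        have := (Nat.modEq_iff_dvd (n := 2 * m)).mp hmq
        push_cast at this ⊢
        convert this using 1
      have hdp : (2 * a : ℤ) ∣ ((2 * t₂ + 1 + i₂ : ℤ) - (2 * t₁ + 1 + i₁)) := by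
        have := (Nat.modEq_iff_dvd (n := 2 * a)).mp hmp
        push_cast at this ⊢
        convert this using 1
      have hieq : i₁ = i₂ := by
        have h2 : (2 : ℤ) ∣ ((2 * t₂ + 1 + i₂ : ℤ) - (2 * t₁ + 1 + i₁)) :=
          dvd_trans ⟨a, by ring⟩ hdp
        obtain ⟨k, hk⟩ := h2
        have bi₁ : i₁ < 2 := h₁.2
        have bi₂ : i₂ < 2 := h₂.2
        omega
      subst hieq
      have hda : (a : ℤ) ∣ (t₂ : ℤ) - t₁ := by
        obtain ⟨k, hk⟩ := hdp
        refine ⟨k, ?_⟩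
        have h2 : (2 : ℤ) * ((t₂ : ℤ) - t₁) = 2 * ((a : ℤ) * k) := by linarith
        exact mul_left_cancel₀ two_ne_zero h2
      have hdm : (m : ℤ) ∣ (t₂ : ℤ) - t₁ := by
        obtain ⟨k, hk⟩ := hdq
        refine ⟨k, ?_⟩
        have h2 : (2 : ℤ) * ((t₂ : ℤ) - t₁) = 2 * ((m : ℤ) * k) := by linarith
        exact mul_left_cancel₀ two_ne_zero h2
      have hteq : t₁ = t₂ := by
        have bt₁ : t₁ < a * m := h₁.1
        have bt₂ : t₂ < a * m := h₂.1
        rcases le_total t₁ t₂ with hle | hle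
        · have hda' : a ∣ t₂ - t₁ := by
            have : ((t₂ - t₁ : ℕ) : ℤ) = (t₂ : ℤ) - t₁ := by omega
            exact_mod_cast (this ▸ hda : (a : ℤ) ∣ ((t₂ - t₁ : ℕ) : ℤ))
          have hdm' : m ∣ t₂ - t₁ := by
            have : ((t₂ - t₁ : ℕ) : ℤ) = (t₂ : ℤ) - t₁ := by omega
            exact_mod_cast (this ▸ hdm : (m : ℤ) ∣ ((t₂ - t₁ : ℕ) : ℤ))
          have := Nat.Coprime.mul_dvd_of_dvd_of_dvd hcop hda' hdm'
          have hlt : t₂ - t₁ < a * m := by omega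
          have := Nat.eq_zero_of_dvd_of_lt this hlt |>.symm
          omega
        · have hda' : a ∣ t₁ - t₂ := by
            have : ((t₁ - t₂ : ℕ) : ℤ) = -((t₂ : ℤ) - t₁) := by omega
            have h3 : (a : ℤ) ∣ ((t₁ - t₂ : ℕ) : ℤ) := this ▸ (dvd_neg.mpr hda)
            exact_mod_cast h3
          have hdm' : m ∣ t₁ - t₂ := by
            have : ((t₁ - t₂ : ℕ) : ℤ) = -((t₂ : ℤ) - t₁) := by omega
            have h3 : (m : ℤ) ∣ ((t₁ - t₂ : ℕ) : ℤ) := this ▸ (dvd_neg.mpr hdm)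
            exact_mod_cast h3
          have := Nat.Coprime.mul_dvd_of_dvd_of_dvd hcop hda' hdm'
          have hlt : t₁ - t₂ < a * m := by omega
          have := Nat.eq_zero_of_dvd_of_lt this hlt
          omega
      exact Prod.ext hteq rfl
    have hterm : ∀ t i : ℕ,
        (DHxi (p * q) ^ (p * b)) ^ (((g : ZMod (p * q)) ^ (2 * t + 1)
            * (x : ZMod (p * q)) ^ i).val)
          = G ((b : ZMod q) * (g : ZMod q) ^ (2 * t + 1)) := by
      intro t i
      have hcastN : (g : ZMod (p * q)) ^ (2 * t + 1) * (x : ZMod (p * q)) ^ i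
          = ((g ^ (2 * t + 1) * x ^ i : ℕ) : ZMod (p * q)) := by push_cast; ring
      rw [hcastN, ZMod.val_natCast, DH_pow_mod _ hwN, hw, hG]
      congr 1
      push_cast
      rw [hxq]
      ring
    have eD1 : ∑ aa ∈ DHD1 p q g x, (DHxi (p * q) ^ (p * b)) ^ aa.val
        = 2 * (a * ∑ t ∈ range m, G ((b : ZMod q) * (g : ZMod q) ^ (2 * t + 1))) := by
      rw [hD1eq, Finset.sum_image hD1inj, Finset.sum_product]
      have : ∀ t ∈ range (a * m), ∑ i ∈ range 2,
          (DHxi (p * q) ^ (p * b)) ^ (((g : ZMod (p * q)) ^ (2 * t + 1)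
            * (x : ZMod (p * q)) ^ i).val)
          = 2 * G ((b : ZMod q) * (g : ZMod q) ^ (2 * t + 1)) := by
        intro t _
        rw [Finset.sum_congr rfl (fun i _ => hterm t i)]
        simp [two_mul]
      rw [Finset.sum_congr rfl this, ← Finset.mul_sum]
      congr 1
      have hper : ∀ t, G ((b : ZMod q) * (g : ZMod q) ^ (2 * (t + m) + 1))
          = G ((b : ZMod q) * (g : ZMod q) ^ (2 * t + 1)) := by
        intro t
        congr 2
        rw [show 2 * (t + m) + 1 = (2 * t + 1) + 2 * m by ring, pow_add, hgq1, mul_one]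
      exact DH_sum_periodic _ m hper a
    have eQNR : ∑ t ∈ range m, G ((b : ZMod q) * (g : ZMod q) ^ (2 * t + 1))
        = DHeta q T := by
      have s1 : ∑ c ∈ DHQNR q, G ((b : ZMod q) * c)
          = ∑ t ∈ range m, G ((b : ZMod q) * (g : ZMod q) ^ (2 * t + 1)) := by
        rw [hQNRdesc, Finset.sum_image hinjQNR]
      have hbinj : ∀ c₁ ∈ DHQNR q, ∀ c₂ ∈ DHQNR q,
          (b : ZMod q) * c₁ = (b : ZMod q) * c₂ → c₁ = c₂ := by
        intro c₁ _ c₂ _ he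
        exact mul_left_cancel₀ hb0 he
      have s2 : ∑ c' ∈ (DHQNR q).image (fun c => (b : ZMod q) * c), G c'
          = ∑ c ∈ DHQNR q, G ((b : ZMod q) * c) := Finset.sum_image hbinj
      rw [← s1, ← s2, hT]
      rfl
    rw [e1, e2, eP, eD1, eQNR]
    have hpc : ((p : ℂ) - 1) = ((2 * a : ℕ) : ℂ) := by
      have : ((p - 1 : ℕ) : ℂ) = (p : ℂ) - 1 := by
        push_cast [Nat.cast_sub hp.one_lt.le]
        ring
      rw [← this, hp2]
    rw [hpc]
    push_cast
    ring
  -- conclude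
  constructor
  · intro hb
    have hb0 : (b : ZMod q) ≠ 0 := by
      simp only [DHQR, Finset.mem_filter] at hb; exact hb.2.1
    apply main _ hb0
    -- image of QNR under mult by QR b is QNR
    obtain ⟨β, hβ⟩ := (by simp only [DHQR, Finset.mem_filter] at hb; exact hb.2.2 :
      ∃ β : ZMod q, β * β = (b : ZMod q))
    have hβ0 : β ≠ 0 := by
      intro h0; rw [h0, mul_zero] at hβ; exact hb0 hβ.symm
    apply Finset.eq_of_subset_of_card_le
    · intro c' hc'
      obtain ⟨c, hc, rfl⟩ := Finset.mem_image.mp hc'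
      simp only [DHQNR, Finset.mem_filter, Finset.mem_univ, true_and] at hc ⊢
      obtain ⟨hc0, hcns⟩ := hc
      refine ⟨mul_ne_zero hb0 hc0, ?_⟩
      rintro ⟨d, hd⟩
      apply hcns
      refine ⟨β⁻¹ * d, ?_⟩
      have : (β⁻¹ * d) * (β⁻¹ * d) = (d * d) * (β * β)⁻¹ := by
        field_simp
      rw [this, hd, hβ]
      field_simp
    · rw [Finset.card_image_of_injOn (fun c₁ _ c₂ _ he => mul_left_cancel₀ hb0 he),
        hcardQNR]
  · intro hb
    have hb0 : (b : ZMod q) ≠ 0 := by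
      simp only [DHQNR, Finset.mem_filter] at hb; exact hb.2.1
    apply main _ hb0
    -- image of QNR under mult by QNR b is QR
    obtain ⟨nb, hnb, hnbe⟩ := hcover _ hb0
    have hnbodd : Odd nb := by
      rcases Nat.even_or_odd nb with he | ho
      · exfalso
        have := hEvenSq nb he
        rw [hnbe] at this
        simp only [DHQNR, Finset.mem_filter] at hb
        exact hb.2.2 this
      · exact ho
    apply Finset.eq_of_subset_of_card_le
    · intro c' hc'
      obtain ⟨c, hc, rfl⟩ := Finset.mem_image.mp hc'
      have hc0 : c ≠ 0 := by
        simp only [DHQNR, Finset.mem_filter] at hc; exact hc.2.1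
      obtain ⟨nc, hnc, hnce⟩ := hcover c hc0
      have hncodd : Odd nc := by
        rw [← hnce] at hc
        exact (hQNRpow nc).mp hc
      have : (b : ZMod q) * c = (g : ZMod q) ^ (nb + nc) := by
        rw [pow_add, hnbe, hnce]
      rw [this]
      exact (hQRpow _).mpr (Odd.add_odd hnbodd hncodd)
    · rw [Finset.card_image_of_injOn (fun c₁ _ c₂ _ he => mul_left_cancel₀ hb0 he),
        hcardQNR, hcardQR]
end

section
/- For the first Ding–Helleseth sequence, the product over a ∈ P satisfies Π_{a ∈ P} S(ξ_N^a) = ((p−1)²·η₀^{(q)}·η₁^{(q)} + p)^{(q−1)/2}. -/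
open Finset

/-!
For `a = jp ∈ P` we have `ξ_N^a = ξ_q^j`, so `S(ξ_N^a)` only depends on the residues mod `q` of
the indices in `D₁ ∪ P`. Every element of `D₁` is nonzero mod `p` and a nonresidue mod `q`. There
are `(p - 1)(q - 1)/2` such `b ∈ Z_N`, and since `gcd(p - 1, q - 1) = 2` the parametrisation of
`D₁` is injective, so `D₁` has that many elements and consists of all of them. By the Chinese
remainder theorem `D₁` then contributes `p - 1` copies of a Gauss period and `P` contributes
`∑_{u ≠ 0} ξ_q^u = -1`, so `S(ξ_q^j) = (p - 1)η₁ - 1` for a residue `j` and `(p - 1)η₀ - 1` for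
a nonresidue. There are `(q - 1)/2` of each, and `η₀ + η₁ = -1` turns the product of the two
factors into `(p - 1)²η₀η₁ + p`.
-/

theorem FiniteField.isSquare_mul_iff_of_ne_zero {F : Type*} [Field F] [Fintype F] [DecidableEq F]
    {a b : F} (ha : a ≠ 0) (hb : b ≠ 0) : IsSquare (a * b) ↔ (IsSquare a ↔ IsSquare b) := by
  rw [← quadraticChar_one_iff_isSquare ha, ← quadraticChar_one_iff_isSquare hb,
    ← quadraticChar_one_iff_isSquare (mul_ne_zero ha hb), map_mul]
  rcases quadraticChar_dichotomy ha with h | h <;>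
    rcases quadraticChar_dichotomy hb with h' | h' <;> simp [h, h']

theorem FiniteField.not_isSquare_of_orderOf_eq {F : Type*} [Field F] [Fintype F]
    (hF : ringChar F ≠ 2) {a : F} (ha : orderOf a = Fintype.card F - 1) : ¬IsSquare a := by
  have ha0 : a ≠ 0 := by
    rintro rfl
    rw [orderOf_zero] at ha
    have := Fintype.one_lt_card (α := F)
    omega
  intro hsq
  have hdvd := orderOf_dvd_of_pow_eq_one ((FiniteField.isSquare_iff hF ha0).mp hsq)
  have hodd := Nat.two_mul_odd_div_two (FiniteField.odd_card_of_char_ne_two hF)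
  have hpos : 0 < Fintype.card F / 2 := Nat.div_pos Fintype.one_lt_card two_pos
  rw [ha] at hdvd
  have := Nat.le_of_dvd hpos hdvd
  omega

namespace ZMod

theorem isOfFinOrder_of_orderOf_eq_sub_one {r : ℕ} [hr : Fact r.Prime] {a : ZMod r}
    (h : orderOf a = r - 1) : IsOfFinOrder a :=
  orderOf_pos_iff.mp (h ▸ Nat.sub_pos_of_lt hr.out.one_lt)

theorem chineseRemainder_eq_castHom {m n : ℕ} (h : m.Coprime n) (b : ZMod (m * n)) :
    chineseRemainder h b = (castHom (dvd_mul_right m n) (ZMod m) b,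
      castHom (dvd_mul_left n m) (ZMod n) b) :=
  Prod.ext (Prod.fst_zmod_cast b) (Prod.snd_zmod_cast b)

theorem sum_filter_castHom_mem {M : Type*} [AddCommMonoid M] {m n : ℕ} [NeZero m] [NeZero n]
    (h : m.Coprime n) (S : Finset (ZMod m)) (T : Finset (ZMod n)) (F : ZMod n → M) :
    ∑ b ∈ univ.filter (fun b : ZMod (m * n) =>
        castHom (dvd_mul_right m n) (ZMod m) b ∈ S ∧ castHom (dvd_mul_left n m) (ZMod n) b ∈ T),
        F (castHom (dvd_mul_left n m) (ZMod n) b) = #S • ∑ c ∈ T, F c := by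
  rw [← sum_const, ← sum_product']
  exact sum_equiv (chineseRemainder h).toEquiv
    (fun b => by simp only [mem_filter, mem_univ, true_and, mem_product,
      chineseRemainder_eq_castHom, RingEquiv.toEquiv_eq_coe, EquivLike.coe_coe])
    (fun b _ => by simp [chineseRemainder_eq_castHom])

theorem sum_range_eq_sum_val {M : Type*} [AddCommMonoid M] (n : ℕ) [NeZero n] (G : ℕ → M) :
    ∑ i ∈ range n, G i = ∑ b : ZMod n, G b.val := by
  obtain ⟨k, rfl⟩ := Nat.exists_eq_succ_of_ne_zero (NeZero.ne n)
  exact (Fin.sum_univ_eq_sum_range G _).symm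

@[to_additive]
theorem prod_Icc_natCast_eq_prod_compl_zero {M : Type*} [CommMonoid M] (n : ℕ) [NeZero n]
    (f : ZMod n → M) : ∏ i ∈ Icc 1 (n - 1), f i = ∏ u ∈ ({0}ᶜ : Finset (ZMod n)), f u := by
  have hval : ∀ i ∈ Icc 1 (n - 1), (i : ZMod n).val = i := fun i hi =>
    val_cast_of_lt (by rw [mem_Icc] at hi; omega)
  refine prod_nbij' (fun i => (i : ZMod n)) val (fun i hi => ?_) (fun u hu => ?_) hval
    (fun u _ => natCast_zmod_val u) (fun _ _ => rfl)
  · rw [mem_compl, mem_singleton, ← ne_eq, ← val_ne_zero, hval i hi]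
    rw [mem_Icc] at hi
    omega
  · rw [mem_compl, mem_singleton, ← ne_eq, ← val_ne_zero] at hu
    rw [mem_Icc]
    have := val_lt u
    omega

theorem sum_compl_zero_stdAddChar_mul {N : ℕ} [NeZero N] {c : ZMod N} (hc : c ≠ 0) :
    ∑ u ∈ ({0}ᶜ : Finset (ZMod N)), stdAddChar (c * u) = -1 := by
  have h := AddChar.sum_mulShift c (isPrimitive_stdAddChar N)
  rw [if_neg hc, ← sum_compl_add_sum {0}] at h
  simp_rw [mul_comm c]
  simpa [eq_neg_iff_add_eq_zero] using h

end ZMod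

theorem DHxi_pow (n : ℕ) [NeZero n] (m : ℕ) : DHxi n ^ m = ZMod.stdAddChar (m : ZMod n) := by
  rw [DHxi, ← Complex.exp_nat_mul, ZMod.stdAddChar_apply, ZMod.toCircle_natCast]
  ring_nf

theorem DHxi_mul_pow_left {p q : ℕ} (hp : p ≠ 0) : DHxi (p * q) ^ p = DHxi q := by
  rw [DHxi, DHxi, ← Complex.exp_nat_mul]
  congr 1
  push_cast
  field_simp

theorem DHeta_eq_sum_stdAddChar (n : ℕ) [NeZero n] (D : Finset (ZMod n)) :
    DHeta n D = ∑ a ∈ D, ZMod.stdAddChar a :=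
  sum_congr rfl fun a _ => by rw [DHxi_pow, ZMod.natCast_zmod_val]

section QuadraticResidues

variable {q : ℕ} [Fact q.Prime]

theorem mem_DHQR {a : ZMod q} : a ∈ DHQR q ↔ a ≠ 0 ∧ IsSquare a := by
  simp [DHQR, IsSquare, eq_comm]

theorem mem_DHQNR {a : ZMod q} : a ∈ DHQNR q ↔ a ≠ 0 ∧ ¬IsSquare a := by
  simp [DHQNR, IsSquare, eq_comm]

theorem disjoint_DHQR_DHQNR : Disjoint (DHQR q) (DHQNR q) :=
  disjoint_left.mpr fun _ h h' => (mem_DHQNR.mp h').2 (mem_DHQR.mp h).2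

theorem DHQR_union_DHQNR : DHQR q ∪ DHQNR q = {0}ᶜ := by
  ext a
  simp only [mem_union, mem_DHQR, mem_DHQNR, mem_compl, mem_singleton]
  tauto

theorem mul_mem_DHQNR_iff_of_mem_DHQR {u : ZMod q} (hu : u ∈ DHQR q) (c : ZMod q) :
    u * c ∈ DHQNR q ↔ c ∈ DHQNR q := by
  rw [mem_DHQR] at hu
  rcases eq_or_ne c 0 with rfl | hc
  · simp [mem_DHQNR]
  · simp [mem_DHQNR, hu.1, hc, FiniteField.isSquare_mul_iff_of_ne_zero hu.1 hc, hu.2]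

theorem mul_mem_DHQR_iff_of_mem_DHQNR {u : ZMod q} (hu : u ∈ DHQNR q) (c : ZMod q) :
    u * c ∈ DHQR q ↔ c ∈ DHQNR q := by
  rw [mem_DHQNR] at hu
  rcases eq_or_ne c 0 with rfl | hc
  · simp [mem_DHQNR, mem_DHQR]
  · simp [mem_DHQNR, mem_DHQR, hu.1, hc, FiniteField.isSquare_mul_iff_of_ne_zero hu.1 hc, hu.2]

theorem sum_DHQNR_mul_of_mem_DHQR {M : Type*} [AddCommMonoid M] {u : ZMod q} (hu : u ∈ DHQR q)
    (F : ZMod q → M) : ∑ c ∈ DHQNR q, F (u * c) = ∑ c ∈ DHQNR q, F c :=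
  sum_equiv (Equiv.mulLeft₀ u (mem_DHQR.mp hu).1)
    (fun c => (mul_mem_DHQNR_iff_of_mem_DHQR hu c).symm) (fun _ _ => rfl)

theorem sum_DHQNR_mul_of_mem_DHQNR {M : Type*} [AddCommMonoid M] {u : ZMod q} (hu : u ∈ DHQNR q)
    (F : ZMod q → M) : ∑ c ∈ DHQNR q, F (u * c) = ∑ c ∈ DHQR q, F c :=
  sum_equiv (Equiv.mulLeft₀ u (mem_DHQNR.mp hu).1)
    (fun c => (mul_mem_DHQR_iff_of_mem_DHQNR hu c).symm) (fun _ _ => rfl)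

theorem card_DHQR_eq_card_DHQNR (hq : q ≠ 2) : #(DHQR q) = #(DHQNR q) := by
  obtain ⟨u, hu⟩ := FiniteField.exists_nonsquare (F := ZMod q) (by rwa [ZMod.ringChar_zmod_n])
  have hu0 : u ≠ 0 := by rintro rfl; exact hu IsSquare.zero
  exact (card_equiv (Equiv.mulLeft₀ u hu0)
    (fun c => (mul_mem_DHQR_iff_of_mem_DHQNR (mem_DHQNR.mpr ⟨hu0, hu⟩) c).symm)).symm

theorem card_DHQR (hq : q ≠ 2) : #(DHQR q) = (q - 1) / 2 := by
  have h := card_union_of_disjoint (disjoint_DHQR_DHQNR (q := q))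
  rw [DHQR_union_DHQNR, card_compl, card_singleton, ZMod.card, ← card_DHQR_eq_card_DHQNR hq] at h
  omega

theorem card_DHQNR (hq : q ≠ 2) : #(DHQNR q) = (q - 1) / 2 := by
  rw [← card_DHQR_eq_card_DHQNR hq, card_DHQR hq]

end QuadraticResidues

theorem DHeta_DHQR_add_DHeta_DHQNR (q : ℕ) [Fact q.Prime] :
    DHeta q (DHQR q) + DHeta q (DHQNR q) = -1 := by
  rw [DHeta_eq_sum_stdAddChar, DHeta_eq_sum_stdAddChar, ← sum_union disjoint_DHQR_DHQNR,
    DHQR_union_DHQNR]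
  simpa using ZMod.sum_compl_zero_stdAddChar_mul (one_ne_zero (α := ZMod q))

section DHP

variable {p q : ℕ} [Fact p.Prime]

theorem val_DHP_param {j : ℕ} (hj : j ∈ Icc 1 (q - 1)) :
    ((j * p : ℕ) : ZMod (p * q)).val = j * p := by
  rw [mem_Icc] at hj
  refine ZMod.val_cast_of_lt ?_
  rw [mul_comm p q]
  exact Nat.mul_lt_mul_of_pos_right (by omega) (Fact.out : p.Prime).pos

theorem injOn_DHP_param :
    Set.InjOn (fun j : ℕ => ((j * p : ℕ) : ZMod (p * q))) ↑(Icc 1 (q - 1)) := fun i hi j hj h => by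
  have hv := congrArg ZMod.val h
  rw [val_DHP_param hi, val_DHP_param hj] at hv
  exact Nat.eq_of_mul_eq_mul_right (Fact.out : p.Prime).pos hv

theorem sum_DHP [NeZero q] {M : Type*} [AddCommMonoid M] (F : ZMod q → M) :
    ∑ b ∈ DHP p q, F (ZMod.castHom (dvd_mul_left q p) (ZMod q) b) =
      ∑ u ∈ ({0}ᶜ : Finset (ZMod q)), F (p * u) := by
  rw [DHP, sum_image injOn_DHP_param, ← ZMod.sum_Icc_natCast_eq_sum_compl_zero]
  simp only [Nat.cast_mul, map_mul, map_natCast, mul_comm]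

end DHP

section DingHelleseth

variable {p q g x : ℕ} [Fact p.Prime] [Fact q.Prime]

theorem injOn_DHD1_param (hgcd : Nat.gcd (p - 1) (q - 1) = 2)
    (hgp : orderOf (g : ZMod p) = p - 1) (hgq : orderOf (g : ZMod q) = q - 1)
    (hxp : (x : ZMod p) = (g : ZMod p)) (hxq : (x : ZMod q) = 1) :
    Set.InjOn (fun ti : ℕ × ℕ => (g : ZMod (p * q)) * ((g : ZMod (p * q)) ^ (2 * ti.1) *
      (x : ZMod (p * q)) ^ ti.2)) ↑(range ((p - 1) * (q - 1) / 4) ×ˢ range 2) := by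
  rintro ⟨t, i⟩ hti ⟨s, j⟩ hsj heq
  simp only [coe_product, coe_range, Set.mem_prod, Set.mem_Iio] at hti hsj
  have hmodp : 2 * t + i + 1 ≡ 2 * s + j + 1 [MOD p - 1] := by
    have h := congrArg (ZMod.castHom (dvd_mul_right p q) (ZMod p)) heq
    simp only [map_mul, map_pow, map_natCast, hxp, ← pow_add, ← pow_succ'] at h
    rwa [(ZMod.isOfFinOrder_of_orderOf_eq_sub_one hgp).pow_eq_pow_iff_modEq,
      hgp] at h
  have hmodq : 2 * t + 1 ≡ 2 * s + 1 [MOD q - 1] := by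
    have h := congrArg (ZMod.castHom (dvd_mul_left q p) (ZMod q)) heq
    simp only [map_mul, map_pow, map_natCast, hxq, one_pow, mul_one, ← pow_succ'] at h
    rwa [(ZMod.isOfFinOrder_of_orderOf_eq_sub_one hgq).pow_eq_pow_iff_modEq,
      hgq] at h
  obtain ⟨a, ha⟩ : 2 ∣ p - 1 := hgcd ▸ Nat.gcd_dvd_left _ _
  obtain ⟨b, hb⟩ : 2 ∣ q - 1 := hgcd ▸ Nat.gcd_dvd_right _ _
  have hab : a.Coprime b := by
    rw [ha, hb, Nat.gcd_mul_left] at hgcd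
    exact Nat.eq_of_mul_eq_mul_left two_pos hgcd
  rw [ha] at hmodp
  rw [hb] at hmodq
  have hij : i = j := by
    have h := (Nat.ModEq.of_dvd (dvd_mul_right 2 a) hmodp)
    unfold Nat.ModEq at h
    omega
  subst hij
  have hta : t ≡ s [MOD a] :=
    (Nat.ModEq.add_right_cancel' (i + 1) hmodp).mul_left_cancel' two_ne_zero
  have htb : t ≡ s [MOD b] :=
    (Nat.ModEq.add_right_cancel' 1 hmodq).mul_left_cancel' two_ne_zero
  have hlt : (p - 1) * (q - 1) / 4 = a * b := by
    rw [ha, hb, show 2 * a * (2 * b) = 4 * (a * b) by ring, Nat.mul_div_cancel_left _ four_pos]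
  rw [hlt] at hti hsj
  rw [((Nat.modEq_and_modEq_iff_modEq_mul hab).mp ⟨hta, htb⟩).eq_of_lt_of_lt hti.1 hsj.1]

theorem card_DHD1 (hgcd : Nat.gcd (p - 1) (q - 1) = 2)
    (hgp : orderOf (g : ZMod p) = p - 1) (hgq : orderOf (g : ZMod q) = q - 1)
    (hxp : (x : ZMod p) = (g : ZMod p)) (hxq : (x : ZMod q) = 1) :
    #(DHD1 p q g x) = (p - 1) * (q - 1) / 2 := by
  rw [DHD1, DHD0, image_image, Function.comp_def,
    card_image_of_injOn (injOn_DHD1_param hgcd hgp hgq hxp hxq), card_product, card_range,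
    card_range]
  obtain ⟨a, ha⟩ : 2 ∣ p - 1 := hgcd ▸ Nat.gcd_dvd_left _ _
  obtain ⟨b, hb⟩ : 2 ∣ q - 1 := hgcd ▸ Nat.gcd_dvd_right _ _
  rw [ha, hb, show 2 * a * (2 * b) = 4 * (a * b) by ring, Nat.mul_div_cancel_left _ four_pos,
    show 4 * (a * b) = 2 * (2 * (a * b)) by ring, Nat.mul_div_cancel_left _ two_pos]
  ring

theorem DHD1_subset (hq2 : q ≠ 2)
    (hgp : orderOf (g : ZMod p) = p - 1) (hgq : orderOf (g : ZMod q) = q - 1)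
    (hxp : (x : ZMod p) = (g : ZMod p)) (hxq : (x : ZMod q) = 1) :
    DHD1 p q g x ⊆ univ.filter (fun b : ZMod (p * q) =>
      ZMod.castHom (dvd_mul_right p q) (ZMod p) b ∈ ({0}ᶜ : Finset (ZMod p)) ∧
        ZMod.castHom (dvd_mul_left q p) (ZMod q) b ∈ DHQNR q) := by
  intro b hb
  obtain ⟨d, hd, rfl⟩ := mem_image.mp hb
  obtain ⟨⟨t, i⟩, -, rfl⟩ := mem_image.mp hd
  have hgp0 := (ZMod.isOfFinOrder_of_orderOf_eq_sub_one hgp).isUnit.ne_zero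
  have hgq0 := (ZMod.isOfFinOrder_of_orderOf_eq_sub_one hgq).isUnit.ne_zero
  simp only [mem_filter, mem_univ, true_and, mem_compl, mem_singleton, mem_DHQNR, map_mul,
    map_pow, map_natCast, hxp, hxq, one_pow, mul_one]
  refine ⟨mul_ne_zero hgp0 (mul_ne_zero (pow_ne_zero _ hgp0) (pow_ne_zero _ hgp0)),
    mul_ne_zero hgq0 (pow_ne_zero _ hgq0), ?_⟩
  rw [FiniteField.isSquare_mul_iff_of_ne_zero hgq0 (pow_ne_zero _ hgq0), pow_mul']
  simpa [IsSquare.sq] using FiniteField.not_isSquare_of_orderOf_eq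
    (by rwa [ZMod.ringChar_zmod_n]) (by rwa [ZMod.card])

theorem DHD1_eq_filter (hpq : p < q) (hgcd : Nat.gcd (p - 1) (q - 1) = 2)
    (hgp : orderOf (g : ZMod p) = p - 1) (hgq : orderOf (g : ZMod q) = q - 1)
    (hxp : (x : ZMod p) = (g : ZMod p)) (hxq : (x : ZMod q) = 1) :
    DHD1 p q g x = univ.filter (fun b : ZMod (p * q) =>
      ZMod.castHom (dvd_mul_right p q) (ZMod p) b ∈ ({0}ᶜ : Finset (ZMod p)) ∧
        ZMod.castHom (dvd_mul_left q p) (ZMod q) b ∈ DHQNR q) := by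
  have hq2 : q ≠ 2 := by have := (Fact.out : p.Prime).two_le; omega
  refine eq_of_subset_of_card_le (DHD1_subset hq2 hgp hgq hxp hxq) ?_
  rw [card_eq_sum_ones, ZMod.sum_filter_castHom_mem ((Nat.coprime_primes Fact.out Fact.out).mpr
    hpq.ne) _ _ (fun _ => 1), ← card_eq_sum_ones, card_DHQNR hq2, card_DHD1 hgcd hgp hgq hxp hxq,
    card_compl, card_singleton, ZMod.card, smul_eq_mul]
  exact Nat.mul_div_le_mul_div_assoc _ _ _

theorem sum_DHD1 {M : Type*} [AddCommMonoid M] (hpq : p < q)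
    (hgcd : Nat.gcd (p - 1) (q - 1) = 2)
    (hgp : orderOf (g : ZMod p) = p - 1) (hgq : orderOf (g : ZMod q) = q - 1)
    (hxp : (x : ZMod p) = (g : ZMod p)) (hxq : (x : ZMod q) = 1) (F : ZMod q → M) :
    ∑ b ∈ DHD1 p q g x, F (ZMod.castHom (dvd_mul_left q p) (ZMod q) b) =
      (p - 1) • ∑ c ∈ DHQNR q, F c := by
  rw [DHD1_eq_filter hpq hgcd hgp hgq hxp hxq, ZMod.sum_filter_castHom_mem
    ((Nat.coprime_primes Fact.out Fact.out).mpr hpq.ne), card_compl, card_singleton, ZMod.card]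

theorem disjoint_DHD1_DHP (hq2 : q ≠ 2)
    (hgp : orderOf (g : ZMod p) = p - 1) (hgq : orderOf (g : ZMod q) = q - 1)
    (hxp : (x : ZMod p) = (g : ZMod p)) (hxq : (x : ZMod q) = 1) :
    Disjoint (DHD1 p q g x) (DHP p q) := by
  refine disjoint_of_subset_left (DHD1_subset hq2 hgp hgq hxp hxq) (disjoint_right.mpr ?_)
  intro b hb
  obtain ⟨j, -, rfl⟩ := mem_image.mp hb
  simp

theorem DHSval1_eq_sum (z : ℂ) : DHSval1 p q g x z = ∑ b ∈ DHD1 p q g x ∪ DHP p q, z ^ b.val := by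
  rw [DHSval1, ZMod.sum_range_eq_sum_val]
  simp only [DHs1, ZMod.natCast_zmod_val, Nat.cast_ite, Nat.cast_one, Nat.cast_zero, ite_mul,
    one_mul, zero_mul]
  rw [sum_ite_mem, univ_inter]

theorem DHSval1_DHxi_pow (hpq : p < q) (hgcd : Nat.gcd (p - 1) (q - 1) = 2)
    (hgp : orderOf (g : ZMod p) = p - 1) (hgq : orderOf (g : ZMod q) = q - 1)
    (hxp : (x : ZMod p) = (g : ZMod p)) (hxq : (x : ZMod q) = 1) {k : ℕ} (hk : (k : ZMod q) ≠ 0) :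
    DHSval1 p q g x (DHxi q ^ k) =
      (p - 1) * ∑ c ∈ DHQNR q, ZMod.stdAddChar ((k : ZMod q) * c) - 1 := by
  have hq2 : q ≠ 2 := by have := (Fact.out : p.Prime).two_le; omega
  have hp0 : (p : ZMod q) ≠ 0 := by
    rw [Ne, ZMod.natCast_eq_zero_iff]
    exact Nat.not_dvd_of_pos_of_lt (Fact.out : p.Prime).pos hpq
  have hpow : ∀ b : ZMod (p * q),
      (DHxi q ^ k) ^ b.val =
        ZMod.stdAddChar ((k : ZMod q) * ZMod.castHom (dvd_mul_left q p) _ b) := by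
    intro b
    rw [← pow_mul, DHxi_pow, Nat.cast_mul, ZMod.natCast_val, ZMod.castHom_apply]
  simp_rw [DHSval1_eq_sum, sum_union (disjoint_DHD1_DHP hq2 hgp hgq hxp hxq), hpow]
  rw [sum_DHD1 hpq hgcd hgp hgq hxp hxq (fun c => ZMod.stdAddChar ((k : ZMod q) * c)),
    sum_DHP (fun c => ZMod.stdAddChar ((k : ZMod q) * c))]
  simp_rw [← mul_assoc]
  rw [ZMod.sum_compl_zero_stdAddChar_mul (mul_ne_zero hk hp0), nsmul_eq_mul,
    Nat.cast_sub (Fact.out : p.Prime).one_le, Nat.cast_one]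
  ring

theorem prod_DHP_DHSval1 (hpq : p < q) (hgcd : Nat.gcd (p - 1) (q - 1) = 2)
    (hgp : orderOf (g : ZMod p) = p - 1) (hgq : orderOf (g : ZMod q) = q - 1)
    (hxp : (x : ZMod p) = (g : ZMod p)) (hxq : (x : ZMod q) = 1) :
    ∏ a ∈ DHP p q, DHSval1 p q g x (DHxi (p * q) ^ a.val) =
      ∏ u ∈ ({0}ᶜ : Finset (ZMod q)), ((p - 1) * ∑ c ∈ DHQNR q, ZMod.stdAddChar (u * c) - 1) := by
  rw [DHP, prod_image injOn_DHP_param, ← ZMod.prod_Icc_natCast_eq_prod_compl_zero]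
  refine prod_congr rfl fun j hj => ?_
  have hj0 : (j : ZMod q) ≠ 0 := by
    rw [mem_Icc] at hj
    rw [Ne, ZMod.natCast_eq_zero_iff]
    exact Nat.not_dvd_of_pos_of_lt (by omega) (by omega)
  rw [val_DHP_param hj, mul_comm j p, pow_mul, DHxi_mul_pow_left (Fact.out : p.Prime).ne_zero,
    DHSval1_DHxi_pow hpq hgcd hgp hgq hxp hxq hj0]

end DingHelleseth

theorem stmt11_general (p q g x : ℕ) [NeZero q] (hp : Nat.Prime p) (hq : Nat.Prime q)
    (hpq : p < q)
    (hgcd : Nat.gcd (p - 1) (q - 1) = 2)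
    (hgp : orderOf (g : ZMod p) = p - 1) (hgq : orderOf (g : ZMod q) = q - 1)
    (hxp : (x : ZMod p) = (g : ZMod p)) (hxq : (x : ZMod q) = 1) :
    ∏ a ∈ DHP p q, DHSval1 p q g x (DHxi (p * q) ^ a.val) =
      (((p : ℂ) - 1) ^ 2 * DHeta q (DHQR q) * DHeta q (DHQNR q) + (p : ℂ)) ^
        ((q - 1) / 2) := by
  have := Fact.mk hp
  have := Fact.mk hq
  have hq2 : q ≠ 2 := by have := hp.two_le; omega
  have hQR : ∀ u ∈ DHQR q, ((p : ℂ) - 1) * ∑ c ∈ DHQNR q, ZMod.stdAddChar (u * c) - 1 =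
      (p - 1) * DHeta q (DHQNR q) - 1 := fun u hu => by
    rw [sum_DHQNR_mul_of_mem_DHQR hu ZMod.stdAddChar, DHeta_eq_sum_stdAddChar]
  have hQNR : ∀ u ∈ DHQNR q, ((p : ℂ) - 1) * ∑ c ∈ DHQNR q, ZMod.stdAddChar (u * c) - 1 =
      (p - 1) * DHeta q (DHQR q) - 1 := fun u hu => by
    rw [sum_DHQNR_mul_of_mem_DHQNR hu ZMod.stdAddChar, DHeta_eq_sum_stdAddChar]
  rw [prod_DHP_DHSval1 hpq hgcd hgp hgq hxp hxq, ← DHQR_union_DHQNR,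
    prod_union disjoint_DHQR_DHQNR, prod_congr rfl hQR, prod_congr rfl hQNR, prod_const,
    prod_const, card_DHQR hq2, card_DHQNR hq2, ← mul_pow]
  congr 1
  linear_combination (1 - (p : ℂ)) * DHeta_DHQR_add_DHeta_DHQNR q

theorem stmt11 (p q g x : ℕ) [NeZero q] (hp : Nat.Prime p) (hq : Nat.Prime q)
    (hpo : Odd p) (hqo : Odd q) (hpq : p < q)
    (hgcd : Nat.gcd (p - 1) (q - 1) = 2)
    (hgp : orderOf (g : ZMod p) = p - 1) (hgq : orderOf (g : ZMod q) = q - 1)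
    (hxp : (x : ZMod p) = (g : ZMod p)) (hxq : (x : ZMod q) = 1) :
    ∏ a ∈ DHP p q, DHSval1 p q g x (DHxi (p * q) ^ a.val) =
      (((p : ℂ) - 1) ^ 2 * DHeta q (DHQR q) * DHeta q (DHQNR q) + (p : ℂ)) ^
        ((q - 1) / 2) :=
  stmt11_general p q g x hp hq hpq hgcd hgp hgq hxp hxq
end

section
/- For the second Ding–Helleseth sequence and for j ∈ {0,1}, every a ∈ D_j satisfies S(ξ_N^a) = −η_j^{(N)}. -/
open Finset

/-!
Reduce modulo `p` and modulo `q`. By the Chinese remainder theorem and the choice of `g` and `x`,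
`D₀`, `D₁` and `Q` are exactly the residues `u ≢ 0 (mod p)` whose reduction mod `q` has quadratic
character `1`, `-1` and `0`. Multiplication by `a ∈ D_j` multiplies that character by `±1`, so it
fixes `Q` and maps `D₁` onto `D_{1-j}`; hence `S(ξ^a) = η_{1-j} + Σ_{u ∈ Q} ξ^u`. Finally
`Σ_{u ∈ Q} ξ^u = -1` and `η₀ + η₁ = 1`, because `ξ^u` sums to zero over the kernel of reduction
modulo any proper divisor `d` of `N` (translating by `d` multiplies the sum by `ξ^d ≠ 1`).
-/

section RootsOfUnity

variable {N : ℕ} [NeZero N]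

lemma DHxi_pow_eq_pow_of_natCast_eq {m n : ℕ} (h : (m : ZMod N) = n) :
    DHxi N ^ m = DHxi N ^ n :=
  pow_eq_pow_of_modEq ((ZMod.natCast_eq_natCast_iff m n N).1 h)
    (Complex.isPrimitiveRoot_exp N (NeZero.ne N)).pow_eq_one

lemma DHxi_pow_val_add (v w : ZMod N) :
    DHxi N ^ (v + w).val = DHxi N ^ v.val * DHxi N ^ w.val := by
  rw [← pow_add]
  exact DHxi_pow_eq_pow_of_natCast_eq (by simp)

lemma pow_DHxi_pow_val (a : ZMod N) (i : ℕ) :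
    (DHxi N ^ a.val) ^ i = DHxi N ^ (a * i).val := by
  rw [← pow_mul]
  exact DHxi_pow_eq_pow_of_natCast_eq (by simp)

lemma sum_DHxi_pow_val_of_castHom_eq_zero {d : ℕ} (hd : d ∣ N) (hdN : d < N) :
    ∑ v with ZMod.castHom hd (ZMod d) v = 0, DHxi N ^ v.val = 0 := by
  set S := ∑ v with ZMod.castHom hd (ZMod d) v = 0, DHxi N ^ v.val
  have hd0 : d ≠ 0 := by
    rintro rfl
    exact NeZero.ne N (Nat.eq_zero_of_zero_dvd hd)
  have hshift : DHxi N ^ d * S = S := by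
    rw [mul_sum]
    refine sum_equiv (Equiv.addRight (d : ZMod N)) (fun v => ?_) (fun v _ => ?_)
    · simp only [mem_filter, mem_univ, true_and, Equiv.coe_addRight, map_add, map_natCast,
        ZMod.natCast_self, add_zero]
    · rw [Equiv.coe_addRight, DHxi_pow_val_add, ZMod.val_cast_of_lt hdN, mul_comm]
  have hne : DHxi N ^ d ≠ 1 :=
    (Complex.isPrimitiveRoot_exp N (NeZero.ne N)).pow_ne_one_of_pos_of_lt hd0 hdN
  have h : (DHxi N ^ d - 1) * S = 0 := by linear_combination hshift
  exact (mul_eq_zero.1 h).resolve_left (sub_ne_zero.2 hne)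

lemma sum_univ_DHxi_pow_val (hN : 1 < N) : ∑ v : ZMod N, DHxi N ^ v.val = 0 := by
  have h := sum_DHxi_pow_val_of_castHom_eq_zero (one_dvd N) hN
  rwa [filter_true_of_mem fun v _ => Subsingleton.elim _ _] at h

lemma sum_range_eq_sum_zmod {M : Type*} [AddCommMonoid M] (f : ZMod N → M) :
    ∑ i ∈ range N, f i = ∑ v, f v :=
  sum_nbij' (↑) ZMod.val (fun _ _ => mem_univ _) (fun v _ => mem_range.2 (ZMod.val_lt v))
    (fun _ hi => ZMod.val_cast_of_lt (mem_range.1 hi)) (fun v _ => ZMod.natCast_zmod_val v)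
    (fun _ _ => rfl)

lemma sum_range_indicator_mul_pow (T : Finset (ZMod N)) (a : ZMod N) :
    ∑ i ∈ range N, ((if (i : ZMod N) ∈ T then 1 else 0 : ℕ) : ℂ) * (DHxi N ^ a.val) ^ i =
      ∑ v ∈ T, DHxi N ^ (a * v).val := by
  simp_rw [pow_DHxi_pow_val]
  rw [sum_range_eq_sum_zmod (fun v => ((if v ∈ T then 1 else 0 : ℕ) : ℂ) * DHxi N ^ (a * v).val)]
  simp

end RootsOfUnity

lemma castHom_eq_zero_iff_dvd_val {N d : ℕ} [NeZero N] (hd : d ∣ N) (v : ZMod N) :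
    ZMod.castHom hd (ZMod d) v = 0 ↔ d ∣ v.val := by
  rw [ZMod.castHom_apply, ZMod.cast_eq_val, ZMod.natCast_eq_zero_iff]

lemma mem_image_Icc_natCast_mul_iff {m d : ℕ} [NeZero (m * d)] (v : ZMod (m * d)) :
    v ∈ (Icc 1 (m - 1)).image (fun k => ((k * d : ℕ) : ZMod (m * d))) ↔ v ≠ 0 ∧ d ∣ v.val := by
  have hd : 0 < d := Nat.pos_of_ne_zero (right_ne_zero_of_mul (NeZero.ne (m * d)))
  constructor
  · intro h
    obtain ⟨k, hk, rfl⟩ := mem_image.1 h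
    rw [mem_Icc] at hk
    have hlt : k * d < m * d := Nat.mul_lt_mul_of_pos_right (by omega) hd
    rw [ZMod.val_cast_of_lt hlt, ne_eq, ZMod.natCast_eq_zero_iff]
    exact ⟨fun h => (Nat.le_of_dvd (Nat.mul_pos (by omega) hd) h).not_gt hlt, dvd_mul_left d k⟩
  · rintro ⟨hv, k, hk⟩
    have hk0 : k ≠ 0 := by
      rintro rfl
      exact hv (ZMod.val_eq_zero v |>.1 hk)
    have hkm : k < m := by
      have := ZMod.val_lt v
      rw [hk, mul_comm m] at this
      exact Nat.lt_of_mul_lt_mul_left this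
    refine mem_image.2 ⟨k, mem_Icc.2 ⟨Nat.pos_of_ne_zero hk0, by omega⟩, ?_⟩
    rw [mul_comm k d, ← hk, ZMod.natCast_zmod_val]

section CRT

variable (p q : ℕ)

abbrev toZModLeft : ZMod (p * q) →+* ZMod p := ZMod.castHom (dvd_mul_right p q) (ZMod p)

abbrev toZModRight : ZMod (p * q) →+* ZMod q := ZMod.castHom (dvd_mul_left q p) (ZMod q)

variable {p q} [NeZero (p * q)]

lemma eq_of_toZModLeft_eq_of_toZModRight_eq (hpq : p.Coprime q) {u v : ZMod (p * q)}
    (hl : toZModLeft p q u = toZModLeft p q v) (hr : toZModRight p q u = toZModRight p q v) :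
    u = v := by
  rw [← sub_eq_zero, ← map_sub, castHom_eq_zero_iff_dvd_val] at hl hr
  rw [← sub_eq_zero, ← ZMod.val_eq_zero]
  exact Nat.eq_zero_of_dvd_of_lt (hpq.mul_dvd_of_dvd_of_dvd hl hr) (ZMod.val_lt _)

lemma isUnit_of_toZModLeft_ne_zero_of_toZModRight_ne_zero (hp : p.Prime) (hq : q.Prime)
    {u : ZMod (p * q)} (hl : toZModLeft p q u ≠ 0) (hr : toZModRight p q u ≠ 0) : IsUnit u := by
  rw [ne_eq, castHom_eq_zero_iff_dvd_val] at hl hr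
  rw [← ZMod.natCast_zmod_val u, ZMod.isUnit_iff_coprime]
  exact Nat.Coprime.mul_right (hp.coprime_iff_not_dvd.2 hl).symm (hq.coprime_iff_not_dvd.2 hr).symm

end CRT

section QuadraticClasses

variable {p q : ℕ} [Fact p.Prime] [Fact q.Prime]

def DHclass (p q : ℕ) [NeZero (p * q)] [Fact q.Prime] (c : ℤ) : Finset (ZMod (p * q)) :=
  {u | toZModLeft p q u ≠ 0 ∧ quadraticChar (ZMod q) (toZModRight p q u) = c}

lemma mem_DHclass {c : ℤ} {u : ZMod (p * q)} :
    u ∈ DHclass p q c ↔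
      toZModLeft p q u ≠ 0 ∧ quadraticChar (ZMod q) (toZModRight p q u) = c := by
  simp [DHclass]

lemma disjoint_DHclass {c d : ℤ} (hcd : c ≠ d) : Disjoint (DHclass p q c) (DHclass p q d) :=
  disjoint_filter.2 fun _ _ hc hd => hcd (hc.2.symm.trans hd.2)

lemma mem_DHclass_zero_iff (hpq : p ≠ q) {u : ZMod (p * q)} :
    u ∈ DHclass p q 0 ↔ u ≠ 0 ∧ toZModRight p q u = 0 := by
  rw [mem_DHclass, quadraticChar_eq_zero_iff]
  refine ⟨fun ⟨hl, hr⟩ => ⟨fun hu => hl (by rw [hu, map_zero]), hr⟩, fun ⟨hu, hr⟩ => ⟨?_, hr⟩⟩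
  refine fun hl => hu (eq_of_toZModLeft_eq_of_toZModRight_eq ?_ ?_ ?_)
  · exact (Nat.coprime_primes Fact.out Fact.out).2 hpq
  · rw [hl, map_zero]
  · rw [hr, map_zero]

lemma mul_mem_DHclass_iff {a v : ZMod (p * q)} {c : ℤ} (ha : a ∈ DHclass p q c) (hc : c ≠ 0)
    (d : ℤ) : a * v ∈ DHclass p q (c * d) ↔ v ∈ DHclass p q d := by
  obtain ⟨hal, har⟩ := mem_DHclass.1 ha
  simp only [mem_DHclass, map_mul, ne_eq, mul_eq_zero, hal, false_or, har, mul_right_inj' hc]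

lemma isUnit_of_mem_DHclass {a : ZMod (p * q)} {c : ℤ} (ha : a ∈ DHclass p q c) (hc : c ≠ 0) :
    IsUnit a := by
  obtain ⟨hal, har⟩ := mem_DHclass.1 ha
  refine isUnit_of_toZModLeft_ne_zero_of_toZModRight_ne_zero Fact.out Fact.out hal
    fun hr => hc ?_
  rw [← har, hr, quadraticChar_zero]

lemma image_mul_left_DHclass {a : ZMod (p * q)} {c : ℤ} (ha : a ∈ DHclass p q c) (hc : c ≠ 0)
    (d : ℤ) : (DHclass p q d).image (a * ·) = DHclass p q (c * d) := by
  obtain ⟨a, rfl⟩ := isUnit_of_mem_DHclass ha hc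
  ext w
  refine ⟨?_, fun hw => mem_image.2 ⟨↑a⁻¹ * w, ?_, a.mul_inv_cancel_left w⟩⟩
  · intro hw
    obtain ⟨v, hv, rfl⟩ := mem_image.1 hw
    exact (mul_mem_DHclass_iff ha hc d).2 hv
  · rwa [← mul_mem_DHclass_iff ha hc, a.mul_inv_cancel_left]

lemma sum_DHclass_mul_left {a : ZMod (p * q)} {c : ℤ} (ha : a ∈ DHclass p q c) (hc : c ≠ 0)
    (d : ℤ) :
    ∑ v ∈ DHclass p q d, DHxi (p * q) ^ (a * v).val = DHeta (p * q) (DHclass p q (c * d)) := by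
  rw [DHeta, ← image_mul_left_DHclass ha hc,
    sum_image fun _ _ _ _ h => (isUnit_of_mem_DHclass ha hc).mul_left_cancel h]

lemma DHeta_DHclass_zero (hpq : p ≠ q) : DHeta (p * q) (DHclass p q 0) = -1 := by
  have hQ : DHclass p q 0 = ({u | toZModRight p q u = 0} : Finset _).erase 0 := by
    ext u
    simp only [mem_DHclass_zero_iff hpq, mem_erase, mem_filter, mem_univ, true_and]
  have hqN : q < p * q := lt_mul_left (Fact.out : q.Prime).pos (Fact.out : p.Prime).one_lt
  rw [DHeta, hQ, sum_erase_eq_sub (by simp only [mem_filter, mem_univ, map_zero, and_self]),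
    sum_DHxi_pow_val_of_castHom_eq_zero _ hqN, ZMod.val_zero, pow_zero, zero_sub]

lemma DHeta_DHclass_one_add_neg_one (hpq : p ≠ q) :
    DHeta (p * q) (DHclass p q 1) + DHeta (p * q) (DHclass p q (-1)) = 1 := by
  have hpN : p < p * q := lt_mul_right (Fact.out : p.Prime).pos (Fact.out : q.Prime).one_lt
  have hN : 1 < p * q := (Fact.out : p.Prime).one_lt.trans hpN
  -- `D₀ ∪ D₁ ∪ Q` is the set of residues prime to `p`, over which `ξ^u` sums to zero
  have hcoprime : ∑ u with toZModLeft p q u ≠ 0, DHxi (p * q) ^ u.val = 0 := by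
    have h := sum_filter_add_sum_filter_not univ (fun u => toZModLeft p q u = 0)
      fun u => DHxi (p * q) ^ u.val
    rwa [sum_DHxi_pow_val_of_castHom_eq_zero _ hpN, sum_univ_DHxi_pow_val hN, zero_add] at h
  have hfiber (c : ℤ) : ({u | toZModLeft p q u ≠ 0} : Finset (ZMod (p * q))).filter
      (fun u => quadraticChar (ZMod q) (toZModRight p q u) = c) = DHclass p q c := by
    ext u
    simp only [mem_filter, mem_univ, true_and, mem_DHclass]
  have hvalues (u : ZMod (p * q)) :
      quadraticChar (ZMod q) (toZModRight p q u) ∈ ({1, -1, 0} : Finset ℤ) := by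
    by_cases hu : toZModRight p q u = 0
    · rw [hu, quadraticChar_zero]
      decide
    · rcases quadraticChar_dichotomy hu with h | h <;> rw [h] <;> decide
  rw [← sum_fiberwise_of_maps_to fun u _ => hvalues u, sum_insert (by decide),
    sum_insert (by decide), sum_singleton] at hcoprime
  simp only [hfiber] at hcoprime
  have h0 := DHeta_DHclass_zero hpq
  unfold DHeta at *
  linear_combination hcoprime - h0

lemma sum_DHclass_neg_one_union_zero_mul_left (hpq : p ≠ q) {a : ZMod (p * q)} {c : ℤ}
    (ha : a ∈ DHclass p q c) (hc : c = 1 ∨ c = -1) :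
    ∑ v ∈ DHclass p q (-1) ∪ DHclass p q 0, DHxi (p * q) ^ (a * v).val =
      -DHeta (p * q) (DHclass p q c) := by
  have hc0 : c ≠ 0 := by rcases hc with rfl | rfl <;> decide
  rw [sum_union (disjoint_DHclass (by decide)), sum_DHclass_mul_left ha hc0,
    sum_DHclass_mul_left ha hc0, mul_zero, DHeta_DHclass_zero hpq]
  have h := DHeta_DHclass_one_add_neg_one (p := p) (q := q) hpq
  rcases hc with rfl | rfl
  · rw [mul_neg_one]
    linear_combination h
  · rw [mul_neg_one, neg_neg]
    linear_combination h

end QuadraticClasses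

namespace IsPrimitiveRoot

variable {F : Type*} [Field F] [Fintype F] {g : F}

lemma exists_pow_eq_of_card_sub_one (hg : IsPrimitiveRoot g (Fintype.card F - 1)) {w : F}
    (hw : w ≠ 0) : ∃ k, g ^ k = w := by
  have : NeZero (Fintype.card F - 1) := ⟨by have := Fintype.one_lt_card (α := F); omega⟩
  obtain ⟨k, -, hk⟩ := hg.eq_pow_of_pow_eq_one (FiniteField.pow_card_sub_one_eq_one w hw)
  exact ⟨k, hk⟩

lemma quadraticChar_eq_neg_one [DecidableEq F] (hF : ringChar F ≠ 2)
    (hg : IsPrimitiveRoot g (Fintype.card F - 1)) : quadraticChar F g = -1 := by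
  have hodd := FiniteField.odd_card_of_char_ne_two hF
  have h2 : 2 < Fintype.card F := by have := Fintype.one_lt_card (α := F); omega
  rw [quadraticChar_eq_pow_of_char_ne_two hF (hg.ne_zero (by omega)),
    if_neg (hg.pow_ne_one_of_pos_of_lt (by omega) (by omega))]

end IsPrimitiveRoot

lemma exists_two_mul_add_modEq {m n : ℕ} (hm : 0 < m) (hn : 0 < n) (hmn : m.gcd n = 2) (i : ℕ)
    {j : ℕ} (hj : Even j) :
    ∃ t < m * n / 4, ∃ ε < 2, 2 * t + ε ≡ i [MOD m] ∧ 2 * t ≡ j [MOD n] := by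
  obtain ⟨m, rfl⟩ : 2 ∣ m := hmn ▸ Nat.gcd_dvd_left _ _
  obtain ⟨n, rfl⟩ : 2 ∣ n := hmn ▸ Nat.gcd_dvd_right _ _
  obtain ⟨j, rfl⟩ := hj
  have hco : m.Coprime n := by
    rw [Nat.gcd_mul_left] at hmn
    unfold Nat.Coprime
    omega
  -- halve both congruences and solve them by the Chinese remainder theorem modulo `m * n`
  set k := Nat.chineseRemainder hco (i / 2) j
  have hmn0 : 0 < m * n := Nat.mul_pos (by omega) (by omega)
  have hkt : k % (m * n) ≡ k [MOD m * n] := Nat.mod_modEq _ _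
  refine ⟨k % (m * n), ?_, i % 2, Nat.mod_lt _ (by norm_num), ?_, ?_⟩
  · rw [show 2 * m * (2 * n) / 4 = m * n by rw [mul_mul_mul_comm]; simp]
    exact Nat.mod_lt _ hmn0
  · calc 2 * (k % (m * n)) + i % 2 ≡ 2 * (i / 2) + i % 2 [MOD 2 * m] :=
          ((hkt.of_mul_right n).trans k.2.1).mul_left' 2 |>.add_right _
      _ = i := Nat.div_add_mod i 2
  · calc 2 * (k % (m * n)) ≡ 2 * j [MOD 2 * n] :=
          ((hkt.of_mul_left m).trans k.2.2).mul_left' 2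
      _ = j + j := two_mul j

section DingHelleseth

variable {p q g x : ℕ} [Fact p.Prime] [Fact q.Prime]

lemma mem_DHclass_one_of_mem_DHD0 (hgp : IsPrimitiveRoot (g : ZMod p) (p - 1))
    (hgq : IsPrimitiveRoot (g : ZMod q) (q - 1)) (hxp : (x : ZMod p) = (g : ZMod p))
    (hxq : (x : ZMod q) = 1) {u : ZMod (p * q)} (hu : u ∈ DHD0 p q g x) : u ∈ DHclass p q 1 := by
  obtain ⟨⟨t, ε⟩, -, rfl⟩ := mem_image.1 hu
  have hgp0 := hgp.ne_zero (Nat.sub_ne_zero_of_lt (Fact.out : p.Prime).one_lt)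
  have hgq0 := hgq.ne_zero (Nat.sub_ne_zero_of_lt (Fact.out : q.Prime).one_lt)
  simp only [mem_DHclass, map_mul, map_pow, map_natCast, hxp, hxq, one_pow, mul_one]
  exact ⟨mul_ne_zero (pow_ne_zero _ hgp0) (pow_ne_zero _ hgp0),
    by rw [pow_mul, quadraticChar_sq_one hgq0, one_pow]⟩

lemma mem_DHD0_of_mem_DHclass_one (hpq : p ≠ q) (hq2 : q ≠ 2)
    (hgcd : Nat.gcd (p - 1) (q - 1) = 2) (hgp : IsPrimitiveRoot (g : ZMod p) (p - 1))
    (hgq : IsPrimitiveRoot (g : ZMod q) (q - 1)) (hxp : (x : ZMod p) = (g : ZMod p))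
    (hxq : (x : ZMod q) = 1) {u : ZMod (p * q)} (hu : u ∈ DHclass p q 1) : u ∈ DHD0 p q g x := by
  obtain ⟨hl, hr⟩ := mem_DHclass.1 hu
  have hr0 : toZModRight p q u ≠ 0 := fun h => by rw [h, quadraticChar_zero] at hr; cases hr
  have hgp' : IsPrimitiveRoot (g : ZMod p) (Fintype.card (ZMod p) - 1) := by rwa [ZMod.card]
  have hgq' : IsPrimitiveRoot (g : ZMod q) (Fintype.card (ZMod q) - 1) := by rwa [ZMod.card]
  obtain ⟨i, hi⟩ := hgp'.exists_pow_eq_of_card_sub_one hl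
  obtain ⟨j, hj⟩ := hgq'.exists_pow_eq_of_card_sub_one hr0
  -- `g` is a non-residue mod `q`, so `u mod q` is an even power of `g`
  have hj2 : Even j := by
    rw [← hj, map_pow, hgq'.quadraticChar_eq_neg_one (by rwa [ZMod.ringChar_zmod_n])] at hr
    exact (neg_one_pow_eq_one_iff_even (by decide)).1 hr
  obtain ⟨t, ht, ε, hε, hti, htj⟩ := exists_two_mul_add_modEq
    (Nat.sub_pos_of_lt (Fact.out : p.Prime).one_lt) (Nat.sub_pos_of_lt (Fact.out : q.Prime).one_lt)
    hgcd i hj2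
  refine mem_image.2 ⟨(t, ε), mem_product.2 ⟨mem_range.2 ht, mem_range.2 hε⟩, ?_⟩
  refine eq_of_toZModLeft_eq_of_toZModRight_eq ((Nat.coprime_primes Fact.out Fact.out).2 hpq) ?_ ?_
  · simp only [map_mul, map_pow, map_natCast, hxp, ← pow_add, ← hi]
    exact pow_eq_pow_of_modEq hti hgp.pow_eq_one
  · simp only [map_mul, map_pow, map_natCast, hxq, one_pow, mul_one, ← hj]
    exact pow_eq_pow_of_modEq htj hgq.pow_eq_one

lemma DHD0_eq_DHclass_one (hpq : p ≠ q) (hq2 : q ≠ 2) (hgcd : Nat.gcd (p - 1) (q - 1) = 2)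
    (hgp : IsPrimitiveRoot (g : ZMod p) (p - 1)) (hgq : IsPrimitiveRoot (g : ZMod q) (q - 1))
    (hxp : (x : ZMod p) = (g : ZMod p)) (hxq : (x : ZMod q) = 1) :
    DHD0 p q g x = DHclass p q 1 :=
  Subset.antisymm (fun _ => mem_DHclass_one_of_mem_DHD0 hgp hgq hxp hxq)
    (fun _ => mem_DHD0_of_mem_DHclass_one hpq hq2 hgcd hgp hgq hxp hxq)

lemma DHD1_eq_DHclass_neg_one (hpq : p ≠ q) (hq2 : q ≠ 2) (hgcd : Nat.gcd (p - 1) (q - 1) = 2)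
    (hgp : IsPrimitiveRoot (g : ZMod p) (p - 1)) (hgq : IsPrimitiveRoot (g : ZMod q) (q - 1))
    (hxp : (x : ZMod p) = (g : ZMod p)) (hxq : (x : ZMod q) = 1) :
    DHD1 p q g x = DHclass p q (-1) := by
  have hg : (g : ZMod (p * q)) ∈ DHclass p q (-1) := by
    rw [mem_DHclass, map_natCast, map_natCast]
    refine ⟨hgp.ne_zero (Nat.sub_ne_zero_of_lt (Fact.out : p.Prime).one_lt), ?_⟩
    have hgq' : IsPrimitiveRoot (g : ZMod q) (Fintype.card (ZMod q) - 1) := by rwa [ZMod.card]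
    exact hgq'.quadraticChar_eq_neg_one (by rwa [ZMod.ringChar_zmod_n])
  rw [DHD1, DHD0_eq_DHclass_one hpq hq2 hgcd hgp hgq hxp hxq,
    image_mul_left_DHclass hg (by decide), mul_one]

lemma DHQ_eq_DHclass_zero (hpq : p ≠ q) : DHQ p q = DHclass p q 0 := by
  ext v
  rw [DHQ, mem_image_Icc_natCast_mul_iff, mem_DHclass_zero_iff hpq, castHom_eq_zero_iff_dvd_val]

end DingHelleseth

theorem stmt12_general (p q g x : ℕ) (hp : Nat.Prime p) (hq : Nat.Prime q) (hpq : p < q)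
    (hgcd : Nat.gcd (p - 1) (q - 1) = 2)
    (hgp : orderOf (g : ZMod p) = p - 1) (hgq : orderOf (g : ZMod q) = q - 1)
    (hxp : (x : ZMod p) = (g : ZMod p)) (hxq : (x : ZMod q) = 1) :
    (∀ a ∈ DHD0 p q g x,
      DHSval2 p q g x (DHxi (p * q) ^ a.val) = -DHeta (p * q) (DHD0 p q g x)) ∧
    (∀ a ∈ DHD1 p q g x,
      DHSval2 p q g x (DHxi (p * q) ^ a.val) = -DHeta (p * q) (DHD1 p q g x)) := by
  have := Fact.mk hp
  have := Fact.mk hq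
  have hq2 : q ≠ 2 := (hp.two_le.trans_lt hpq).ne'
  have hgp' : IsPrimitiveRoot (g : ZMod p) (p - 1) := hgp ▸ IsPrimitiveRoot.orderOf _
  have hgq' : IsPrimitiveRoot (g : ZMod q) (q - 1) := hgq ▸ IsPrimitiveRoot.orderOf _
  have hD0 := DHD0_eq_DHclass_one hpq.ne hq2 hgcd hgp' hgq' hxp hxq
  have hD1 := DHD1_eq_DHclass_neg_one hpq.ne hq2 hgcd hgp' hgq' hxp hxq
  have hS (a : ZMod (p * q)) : DHSval2 p q g x (DHxi (p * q) ^ a.val) =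
      ∑ v ∈ DHclass p q (-1) ∪ DHclass p q 0, DHxi (p * q) ^ (a * v).val := by
    rw [← hD1, ← DHQ_eq_DHclass_zero hpq.ne]
    exact sum_range_indicator_mul_pow _ a
  rw [hD0, hD1]
  exact ⟨fun a ha => (hS a).trans (sum_DHclass_neg_one_union_zero_mul_left hpq.ne ha (.inl rfl)),
    fun a ha => (hS a).trans (sum_DHclass_neg_one_union_zero_mul_left hpq.ne ha (.inr rfl))⟩

theorem stmt12 (p q g x : ℕ) (hp : Nat.Prime p) (hq : Nat.Prime q)
    (hpo : Odd p) (hqo : Odd q) (hpq : p < q)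
    (hgcd : Nat.gcd (p - 1) (q - 1) = 2)
    (hgp : orderOf (g : ZMod p) = p - 1) (hgq : orderOf (g : ZMod q) = q - 1)
    (hxp : (x : ZMod p) = (g : ZMod p)) (hxq : (x : ZMod q) = 1) :
    (∀ a ∈ DHD0 p q g x,
      DHSval2 p q g x (DHxi (p * q) ^ a.val) = -DHeta (p * q) (DHD0 p q g x)) ∧
    (∀ a ∈ DHD1 p q g x,
      DHSval2 p q g x (DHxi (p * q) ^ a.val) = -DHeta (p * q) (DHD1 p q g x)) :=
  stmt12_general p q g x hp hq hpq hgcd hgp hgq hxp hxq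
end

section
/- For the second Ding–Helleseth sequence, if a = pb ∈ P with b a nonzero quadratic residue modulo q, then S(ξ_N^a) = −(p−1)·η₀^{(q)}; if b is a quadratic nonresidue modulo q, then S(ξ_N^a) = −(p−1)·η₁^{(q)}. -/
open Finset

theorem DHpowEq {M : Type*} [CommMonoid M] {c : M} (h : IsOfFinOrder c) {A B : ℕ} :
    c ^ A = c ^ B ↔ A ≡ B [MOD orderOf c] := by
  obtain ⟨u, rfl⟩ := h.isUnit
  rw [← Units.val_pow_eq_pow_val, ← Units.val_pow_eq_pow_val, orderOf_units,
    ← Units.ext_iff]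
  exact pow_eq_pow_iff_modEq

theorem DHshift_sum (F : ℕ → ℂ) (n : ℕ) (hF : ∀ t, F (t + n) = F t) (u : ℕ) :
    ∑ t ∈ range n, F (t + u) = ∑ t ∈ range n, F t := by
  induction u with
  | zero => simp
  | succ u ih =>
    have h1 : ∑ t ∈ range (n+1), F (t + u) = (∑ t ∈ range n, F (t + 1 + u)) + F u := by
      rw [Finset.sum_range_succ']; simp
    have h2 : ∑ t ∈ range (n+1), F (t + u) = (∑ t ∈ range n, F (t + u)) + F (n + u) := by
      rw [Finset.sum_range_succ]
    have h3 : F (n + u) = F u := by rw [Nat.add_comm n u, hF]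
    have h4 : ∀ t, F (t + 1 + u) = F (t + (u+1)) := by intro t; ring_nf
    rw [Finset.sum_congr rfl (fun t _ => h4 t)] at h1
    have := h1.symm.trans h2
    rw [h3] at this
    have := add_right_cancel this
    rw [this, ih]

theorem DHperiodic_sum (F : ℕ → ℂ) (n : ℕ) (hF : ∀ t, F (t + n) = F t) (k u : ℕ) :
    ∑ t ∈ range (k * n), F (t + u) = k * ∑ t ∈ range n, F t := by
  induction k with
  | zero => simp
  | succ k ih =>
    rw [Nat.succ_mul, Finset.sum_range_add, ih]
    have : ∀ t, F (k * n + t + u) = F (t + (k*n + u)) := by intro t; ring_nf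
    rw [Finset.sum_congr rfl (fun t _ => this t), DHshift_sum F n hF, ← DHshift_sum F n hF u]
    push_cast; ring

theorem DHsum_zmod (n : ℕ) [NeZero n] (F : ℕ → ℂ) :
    ∑ a : ZMod n, F a.val = ∑ i ∈ range n, F i := by
  apply Finset.sum_nbij' (fun a : ZMod n => a.val) (fun i : ℕ => (i : ZMod n))
  · intro a _; exact Finset.mem_range.mpr (ZMod.val_lt a)
  · intro i _; exact Finset.mem_univ _
  · intro a _; exact ZMod.natCast_rightInverse a
  · intro i hi; exact ZMod.val_natCast_of_lt (Finset.mem_range.mp hi)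
  · intro a _; rfl

theorem DHxi_pow_self {n : ℕ} (hn : n ≠ 0) : DHxi n ^ n = 1 :=
  (Complex.isPrimitiveRoot_exp n hn).pow_eq_one

theorem DHxi_congr {n : ℕ} (hn : n ≠ 0) {A B : ℕ} (h : A ≡ B [MOD n]) :
    DHxi n ^ A = DHxi n ^ B := by
  conv_lhs => rw [← Nat.div_add_mod A n]
  conv_rhs => rw [← Nat.div_add_mod B n]
  rw [pow_add, pow_add, pow_mul, pow_mul, DHxi_pow_self hn, one_pow, one_pow, h]

theorem DHfin {q : ℕ} (hq : q.Prime) {c : ZMod q} (hc : orderOf c = q - 1) :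
    IsOfFinOrder c := by
  rw [← orderOf_pos_iff, hc]
  have := hq.two_le; omega

theorem DHpow_image {q : ℕ} [NeZero q] (hq : q.Prime) {c : ZMod q} (hc : orderOf c = q - 1) :
    (range (q-1)).image (fun s => c ^ s) = Finset.univ.filter (· ≠ 0) := by
  haveI : Fact q.Prime := ⟨hq⟩
  have hfin : IsOfFinOrder c := DHfin hq hc
  have hcne : c ≠ 0 := hfin.isUnit.ne_zero
  apply Finset.eq_of_subset_of_card_le
  · intro y hy
    obtain ⟨s, _, rfl⟩ := Finset.mem_image.mp hy
    exact Finset.mem_filter.mpr ⟨Finset.mem_univ _, pow_ne_zero s hcne⟩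
  · have h1 : (Finset.univ.filter (· ≠ 0) : Finset (ZMod q)).card = q - 1 := by
      rw [Finset.filter_ne', Finset.card_erase_of_mem (Finset.mem_univ _)]
      simp [Finset.card_univ, ZMod.card]
    have h2 : ((range (q-1)).image (fun s => c ^ s)).card = q - 1 := by
      rw [Finset.card_image_of_injOn, Finset.card_range]
      intro s hs s' hs' h
      rw [DHpowEq hfin, hc] at h
      have hs := Finset.mem_range.mp hs
      have hs' := Finset.mem_range.mp hs'
      rwa [Nat.ModEq, Nat.mod_eq_of_lt hs, Nat.mod_eq_of_lt hs'] at h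
    omega

theorem DHpow_surj {q : ℕ} [NeZero q] (hq : q.Prime) {c : ZMod q} (hc : orderOf c = q - 1)
    {y : ZMod q} (hy : y ≠ 0) : ∃ s, s < q - 1 ∧ y = c ^ s := by
  haveI : Fact q.Prime := ⟨hq⟩
  have : y ∈ Finset.univ.filter (· ≠ 0) := Finset.mem_filter.mpr ⟨Finset.mem_univ _, hy⟩
  rw [← DHpow_image hq hc] at this
  obtain ⟨s, hs, rfl⟩ := Finset.mem_image.mp this
  exact ⟨s, Finset.mem_range.mp hs, rfl⟩



theorem DHQNR_image {q : ℕ} [NeZero q] (hq : q.Prime) {c : ZMod q}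
    (hc : orderOf c = q - 1) {Q2 : ℕ} (hQ2 : q - 1 = 2 * Q2) :
    (range Q2).image (fun t => c ^ (2*t+1)) = DHQNR q := by
  haveI : Fact q.Prime := ⟨hq⟩
  have hfin : IsOfFinOrder c := DHfin hq hc
  have hcne : c ≠ 0 := hfin.isUnit.ne_zero
  ext y
  simp only [Finset.mem_image, DHQNR, Finset.mem_filter, Finset.mem_univ, true_and,
    Finset.mem_range]
  constructor
  · rintro ⟨t, ht, rfl⟩
    refine ⟨pow_ne_zero _ hcne, ?_⟩
    rintro ⟨b, hb⟩
    have hbne : b ≠ 0 := by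
      rintro rfl; exact pow_ne_zero _ hcne (by rw [← hb]; ring)
    obtain ⟨s, hs, rfl⟩ := DHpow_surj hq hc hbne
    rw [← pow_add] at hb
    rw [DHpowEq hfin, hc] at hb
    have := hb.of_dvd ⟨Q2, hQ2⟩
    rw [Nat.ModEq] at this
    omega
  · rintro ⟨hy0, hnsq⟩
    obtain ⟨s, hs, rfl⟩ := DHpow_surj hq hc hy0
    rcases Nat.even_or_odd s with ⟨m, rfl⟩ | ⟨t, rfl⟩
    · exact absurd ⟨c ^ m, by rw [← pow_add]⟩ hnsq
    · exact ⟨t, by omega, rfl⟩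

theorem DHQR_image {q : ℕ} [NeZero q] (hq : q.Prime) {c : ZMod q}
    (hc : orderOf c = q - 1) {Q2 : ℕ} (hQ2 : q - 1 = 2 * Q2) :
    (range Q2).image (fun t => c ^ (2*t)) = DHQR q := by
  haveI : Fact q.Prime := ⟨hq⟩
  have hfin : IsOfFinOrder c := DHfin hq hc
  have hcne : c ≠ 0 := hfin.isUnit.ne_zero
  ext y
  simp only [Finset.mem_image, DHQR, Finset.mem_filter, Finset.mem_univ, true_and,
    Finset.mem_range]
  constructor
  · rintro ⟨t, ht, rfl⟩
    exact ⟨pow_ne_zero _ hcne, ⟨c ^ t, by rw [← pow_add]; ring_nf⟩⟩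
  · rintro ⟨hy0, hsq⟩
    obtain ⟨s, hs, rfl⟩ := DHpow_surj hq hc hy0
    rcases Nat.even_or_odd s with ⟨m, rfl⟩ | ⟨t, hodd⟩
    · have hm : m < Q2 ∨ (m - Q2 < Q2 ∧ c ^ (m+m) = c ^ (2*(m-Q2))) := by
        by_cases h : m < Q2
        · exact Or.inl h
        · refine Or.inr ⟨by omega, ?_⟩
          rw [DHpowEq hfin, hc, hQ2]
          have heq : m + m = 2*(m - Q2) + 2*Q2 := by omega
          rw [heq, Nat.ModEq, Nat.add_mod_right]
      rcases hm with h | ⟨h1, h2⟩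
      · exact ⟨m, h, by ring_nf⟩
      · exact ⟨m - Q2, h1, by rw [← h2]⟩
    · -- s odd contradicts being a square
      exfalso
      obtain ⟨b, hb⟩ := hsq
      have hbne : b ≠ 0 := by
        rintro rfl; exact pow_ne_zero _ hcne (by rw [← hb]; ring)
      obtain ⟨u, hu, rfl⟩ := DHpow_surj hq hc hbne
      rw [← pow_add, DHpowEq hfin, hc] at hb
      have := hb.of_dvd ⟨Q2, hQ2⟩
      rw [Nat.ModEq] at this
      omega

theorem DHinjOn_odd {q : ℕ} (hq : q.Prime) {c : ZMod q}
    (hc : orderOf c = q - 1) {Q2 : ℕ} (hQ2 : q - 1 = 2 * Q2) (j : ℕ) (hj : j < 2) :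
    Set.InjOn (fun t => c ^ (2*t+j)) (range Q2) := by
  intro t ht t' ht' h
  simp only [Finset.coe_range, Set.mem_Iio] at ht ht'
  rw [DHpowEq (DHfin hq hc), hc, Nat.ModEq,
    Nat.mod_eq_of_lt (by omega), Nat.mod_eq_of_lt (by omega)] at h
  omega

theorem DHSval2_eq (p q g x : ℕ) (hp : Nat.Prime p) (hq : Nat.Prime q)
    (hpo : Odd p) (hqo : Odd q) (hpq : p < q)
    (hgcd : Nat.gcd (p - 1) (q - 1) = 2)
    (hgp : orderOf (g : ZMod p) = p - 1) (hgq : orderOf (g : ZMod q) = q - 1)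
    (hxp : (x : ZMod p) = (g : ZMod p)) (hxq : (x : ZMod q) = 1)
    {P2 Q2 : ℕ} (hP2 : p - 1 = 2 * P2) (hQ2 : q - 1 = 2 * Q2) (b : ℕ) :
    DHSval2 p q g x (DHxi (p * q) ^ (p * b)) =
      ((p : ℂ) - 1) + ((p : ℂ) - 1) * ∑ t ∈ range Q2, DHxi q ^ (b * g ^ (2 * t + 1)) := by
  have hp2 : 2 < p := by rcases hpo with ⟨k, hk⟩; have := hp.two_le; omega
  have hq2 : 2 < q := by omega
  have hN0 : p * q ≠ 0 := Nat.mul_ne_zero (by omega) (by omega)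
  haveI : NeZero (p * q) := ⟨hN0⟩
  haveI : NeZero q := ⟨by omega⟩
  have hq0 : q ≠ 0 := by omega
  haveI : Fact p.Prime := ⟨hp⟩
  haveI : Fact q.Prime := ⟨hq⟩
  have hmulq : ∀ k : ℕ, k ≤ p - 1 → k * q < p * q := fun k hk =>
    (Nat.mul_lt_mul_right (by omega)).mpr (by omega)
  have hP2pos : 0 < P2 := by omega
  have hQ2pos : 0 < Q2 := by omega
  have hcop : Nat.Coprime P2 Q2 := by
    have := Nat.gcd_mul_left 2 P2 Q2
    rw [← hP2, ← hQ2, hgcd] at this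
    unfold Nat.Coprime; omega
  have hM : (p - 1) * (q - 1) / 4 = P2 * Q2 := by
    have h4 : (p - 1) * (q - 1) = 4 * (P2 * Q2) := by rw [hP2, hQ2]; ring
    rw [h4, Nat.mul_div_cancel_left _ (by norm_num)]
  set ξ := DHxi (p * q) with hξdef
  set ζ := DHxi q with hζdef
  set z := ξ ^ (p * b) with hzdef
  have hζp : ξ ^ p = ζ := by
    rw [hξdef, hζdef, DHxi, DHxi, ← Complex.exp_nat_mul]
    congr 1
    have hpc : (p : ℂ) ≠ 0 := Nat.cast_ne_zero.mpr (by omega)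
    have hqc : (q : ℂ) ≠ 0 := Nat.cast_ne_zero.mpr hq0
    push_cast
    field_simp
  have hzval : ∀ A B : ℕ, A ≡ B [MOD q] → ζ ^ A = ζ ^ B := fun A B h => DHxi_congr hq0 h
  have hgq1 : g ^ (q - 1) ≡ 1 [MOD q] := by
    have h1 : ((g ^ (q - 1) : ℕ) : ZMod q) = ((1 : ℕ) : ZMod q) := by
      push_cast
      rw [← hgq]
      exact pow_orderOf_eq_one _
    exact (ZMod.natCast_eq_natCast_iff _ _ _).mp h1
  have hxq1 : x ≡ 1 [MOD q] := by
    have h1 : ((x : ℕ) : ZMod q) = ((1 : ℕ) : ZMod q) := by push_cast; exact hxq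
    exact (ZMod.natCast_eq_natCast_iff _ _ _).mp h1
  -- Step 1: sum over the union
  have step1 : DHSval2 p q g x z = ∑ a ∈ DHD1 p q g x ∪ DHQ p q, z ^ a.val := by
    rw [DHSval2, ← DHsum_zmod (p * q) (fun i => (DHs2 p q g x i : ℂ) * z ^ i)]
    have hterm : ∀ a : ZMod (p * q),
        (DHs2 p q g x a.val : ℂ) * z ^ a.val =
          if a ∈ DHD1 p q g x ∪ DHQ p q then z ^ a.val else 0 := by
      intro a
      have hc : ((a.val : ℕ) : ZMod (p * q)) = a := ZMod.natCast_rightInverse a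
      rw [DHs2, hc]
      split_ifs <;> simp
    rw [Finset.sum_congr rfl (fun a _ => hterm a), Finset.sum_ite_mem, Finset.univ_inter]
  -- description of D1 as image
  have hD1 : DHD1 p q g x = (range (P2 * Q2) ×ˢ range 2).image
      (fun ti : ℕ × ℕ => ((g ^ (2 * ti.1 + 1) * x ^ ti.2 : ℕ) : ZMod (p * q))) := by
    rw [DHD1, DHD0, hM, Finset.image_image]
    congr 1
    funext ti
    simp only [Function.comp]
    push_cast
    ring
  -- membership facts mod q
  have hd1cast : ∀ a ∈ DHD1 p q g x, ((a.val : ℕ) : ZMod q) ≠ 0 := by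
    intro a ha
    rw [hD1] at ha
    obtain ⟨ti, _, rfl⟩ := Finset.mem_image.mp ha
    set C := g ^ (2 * ti.1 + 1) * x ^ ti.2 with hC
    have hv : (((C : ℕ) : ZMod (p * q)).val : ZMod q) = ((C : ℕ) : ZMod q) := by
      rw [ZMod.val_natCast, ZMod.natCast_eq_natCast_iff]
      exact (Nat.mod_modEq C (p * q)).of_dvd (dvd_mul_left q p)
    rw [hv, hC]
    push_cast
    rw [hxq, one_pow, mul_one]
    exact pow_ne_zero _ (DHfin hq hgq).isUnit.ne_zero
  have hQcast : ∀ a ∈ DHQ p q, ((a.val : ℕ) : ZMod q) = 0 := by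
    intro a ha
    obtain ⟨k, hk, rfl⟩ := Finset.mem_image.mp ha
    have hk' := Finset.mem_Icc.mp hk
    have hlt : k * q < p * q := hmulq k hk'.2
    rw [ZMod.val_natCast_of_lt hlt]
    push_cast
    rw [ZMod.natCast_self, mul_zero]
  have hdisj : Disjoint (DHD1 p q g x) (DHQ p q) := by
    rw [Finset.disjoint_left]
    intro a ha ha'
    exact hd1cast a ha (hQcast a ha')
  -- Q sum
  have stepQ : ∑ a ∈ DHQ p q, z ^ a.val = (p : ℂ) - 1 := by
    rw [DHQ, Finset.sum_image]
    · have hterm : ∀ k ∈ Finset.Icc 1 (p - 1), z ^ (((k * q : ℕ) : ZMod (p * q)).val) = 1 := by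
        intro k hk
        have hk' := Finset.mem_Icc.mp hk
        have hlt : k * q < p * q := hmulq k hk'.2
        rw [ZMod.val_natCast_of_lt hlt, hzdef, ← pow_mul]
        have : p * b * (k * q) = p * q * (b * k) := by ring
        rw [this, pow_mul, DHxi_pow_self hN0, one_pow]
      rw [Finset.sum_congr rfl hterm, Finset.sum_const, Nat.card_Icc]
      have : p - 1 + 1 - 1 = p - 1 := by omega
      rw [this, nsmul_eq_mul, mul_one]
      push_cast [Nat.cast_sub hp.one_le]
      ring
    · intro k hk k' hk' h
      have hk1 := Finset.mem_Icc.mp hk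
      have hk1' := Finset.mem_Icc.mp hk'
      rw [ZMod.natCast_eq_natCast_iff] at h
      rw [Nat.ModEq, Nat.mod_eq_of_lt (hmulq k hk1.2), Nat.mod_eq_of_lt (hmulq k' hk1'.2)] at h
      exact Nat.eq_of_mul_eq_mul_right (by omega) h
  -- injectivity of the D1 parametrization
  have hinj : ∀ ti ∈ range (P2 * Q2) ×ˢ range 2, ∀ ti' ∈ range (P2 * Q2) ×ˢ range 2,
      ((g ^ (2 * ti.1 + 1) * x ^ ti.2 : ℕ) : ZMod (p * q)) =
        ((g ^ (2 * ti'.1 + 1) * x ^ ti'.2 : ℕ) : ZMod (p * q)) → ti = ti' := by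
    rintro ⟨t, i⟩ hti ⟨t', i'⟩ hti' h
    obtain ⟨ht, hi⟩ := Finset.mem_product.mp hti
    obtain ⟨ht', hi'⟩ := Finset.mem_product.mp hti'
    rw [Finset.mem_range] at ht hi ht' hi'
    rw [ZMod.natCast_eq_natCast_iff] at h
    have hmp : g ^ (2 * t + 1) * x ^ i ≡ g ^ (2 * t' + 1) * x ^ i' [MOD p] :=
      h.of_dvd (dvd_mul_right p q)
    have hmq : g ^ (2 * t + 1) * x ^ i ≡ g ^ (2 * t' + 1) * x ^ i' [MOD q] :=
      h.of_dvd (dvd_mul_left q p)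
    have hzp : (g : ZMod p) ^ (2 * t + 1 + i) = (g : ZMod p) ^ (2 * t' + 1 + i') := by
      have h1 := (ZMod.natCast_eq_natCast_iff _ _ _).mpr hmp
      push_cast at h1
      rw [hxp, ← pow_add, ← pow_add] at h1
      exact h1
    have hzq : (g : ZMod q) ^ (2 * t + 1) = (g : ZMod q) ^ (2 * t' + 1) := by
      have h1 := (ZMod.natCast_eq_natCast_iff _ _ _).mpr hmq
      push_cast at h1
      rw [hxq] at h1
      simp only [one_pow, mul_one] at h1
      exact h1
    rw [DHpowEq (DHfin hp hgp), hgp, hP2] at hzp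
    rw [DHpowEq (DHfin hq hgq), hgq, hQ2] at hzq
    -- t ≡ t' mod Q2
    have htq : t ≡ t' [MOD Q2] := by
      have h1 : 2 * t ≡ 2 * t' [MOD 2 * Q2] := hzq.add_right_cancel' 1
      exact Nat.ModEq.mul_left_cancel' (by norm_num) h1
    -- i = i'
    have hieq : i = i' := by
      have h2 : 2 * t + 1 + i ≡ 2 * t' + 1 + i' [MOD 2] := hzp.of_dvd ⟨P2, rfl⟩
      rw [Nat.ModEq] at h2
      omega
    subst hieq
    have htp : t ≡ t' [MOD P2] := by
      have e1 : 2 * t + 1 + i = 2 * t + (1 + i) := by ring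
      have e2 : 2 * t' + 1 + i = 2 * t' + (1 + i) := by ring
      rw [e1, e2] at hzp
      have h1 : 2 * t ≡ 2 * t' [MOD 2 * P2] := hzp.add_right_cancel' (1 + i)
      exact Nat.ModEq.mul_left_cancel' (by norm_num) h1
    have hfull : t ≡ t' [MOD P2 * Q2] :=
      (Nat.modEq_and_modEq_iff_modEq_mul hcop).mp ⟨htp, htq⟩
    rw [Nat.ModEq, Nat.mod_eq_of_lt ht, Nat.mod_eq_of_lt ht'] at hfull
    simp only [Prod.mk.injEq]
    exact ⟨hfull, trivial⟩
  -- the D1 sum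
  have stepD : ∑ a ∈ DHD1 p q g x, z ^ a.val =
      ((p : ℂ) - 1) * ∑ t ∈ range Q2, ζ ^ (b * g ^ (2 * t + 1)) := by
    rw [hD1, Finset.sum_image hinj]
    have hterm : ∀ ti : ℕ × ℕ,
        z ^ (((g ^ (2 * ti.1 + 1) * x ^ ti.2 : ℕ) : ZMod (p * q)).val) =
          ζ ^ (b * g ^ (2 * ti.1 + 1)) := by
      rintro ⟨t, i⟩
      set C := g ^ (2 * t + 1) * x ^ i with hC
      set A := ((C : ℕ) : ZMod (p * q)).val with hA
      have h1 : z ^ A = ζ ^ (b * A) := by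
        rw [hzdef, ← pow_mul, mul_assoc, pow_mul, hζp]
      rw [h1]
      apply hzval
      have hAC : A ≡ C [MOD q] := by
        rw [hA, ZMod.val_natCast]
        exact (Nat.mod_modEq C (p * q)).of_dvd (dvd_mul_left q p)
      calc b * A ≡ b * C [MOD q] := hAC.mul_left b
        _ = b * g ^ (2 * t + 1) * x ^ i := by rw [hC]; ring
        _ ≡ b * g ^ (2 * t + 1) * 1 [MOD q] := (Nat.ModEq.refl _).mul (hxq1.pow i |>.trans (by rw [one_pow]))
        _ = b * g ^ (2 * t + 1) := by ring
    rw [Finset.sum_congr rfl (fun ti _ => hterm ti)]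
    rw [Finset.sum_product]
    simp only [Finset.sum_const, Finset.card_range, nsmul_eq_mul, Nat.cast_ofNat]
    have hper : ∀ t, (fun m => ζ ^ (b * g ^ (2 * m + 1))) (t + Q2) =
        (fun m => ζ ^ (b * g ^ (2 * m + 1))) t := by
      intro t
      simp only
      apply hzval
      have he : 2 * (t + Q2) + 1 = (2 * t + 1) + (q - 1) := by omega
      rw [he, pow_add]
      calc b * (g ^ (2 * t + 1) * g ^ (q - 1)) ≡ b * (g ^ (2 * t + 1) * 1) [MOD q] :=
        ((Nat.ModEq.refl _).mul hgq1).mul_left b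
        _ = b * g ^ (2 * t + 1) := by ring
    have hmult := DHperiodic_sum (fun m => ζ ^ (b * g ^ (2 * m + 1))) Q2 hper P2 0
    simp only [add_zero] at hmult
    rw [← Finset.mul_sum, hmult]
    have hPc : (p : ℂ) - 1 = 2 * P2 := by
      have h0 : ((p - 1 : ℕ) : ℂ) = ((2 * P2 : ℕ) : ℂ) := by rw [hP2]
      push_cast [Nat.cast_sub hp.one_le] at h0
      exact h0
    rw [hPc]
    ring
  rw [step1, Finset.sum_union hdisj, stepQ, stepD]
  ring

theorem stmt14 (p q g x : ℕ) [NeZero q] (hp : Nat.Prime p) (hq : Nat.Prime q)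
    (hpo : Odd p) (hqo : Odd q) (hpq : p < q)
    (hgcd : Nat.gcd (p - 1) (q - 1) = 2)
    (hgp : orderOf (g : ZMod p) = p - 1) (hgq : orderOf (g : ZMod q) = q - 1)
    (hxp : (x : ZMod p) = (g : ZMod p)) (hxq : (x : ZMod q) = 1) :
    ∀ b : ℕ,
      ((b : ZMod q) ∈ DHQR q →
        DHSval2 p q g x (DHxi (p * q) ^ (p * b)) =
          -(((p : ℂ) - 1) * DHeta q (DHQR q))) ∧
      ((b : ZMod q) ∈ DHQNR q →
        DHSval2 p q g x (DHxi (p * q) ^ (p * b)) =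
          -(((p : ℂ) - 1) * DHeta q (DHQNR q))) := by
  intro b
  have hp2 : 2 < p := by rcases hpo with ⟨k, hk⟩; have := hp.two_le; omega
  have hq2 : 2 < q := by omega
  obtain ⟨kp, hkp⟩ := hpo
  obtain ⟨kq, hkq⟩ := hqo
  have hP2 : p - 1 = 2 * kp := by omega
  have hQ2 : q - 1 = 2 * kq := by omega
  have hq0 : q ≠ 0 := by omega
  haveI : Fact q.Prime := ⟨hq⟩
  have hgfin := DHfin hq hgq
  have hgzq1 : (g : ZMod q) ^ (q - 1) = 1 := by rw [← hgq]; exact pow_orderOf_eq_one _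
  have hzval : ∀ A B : ℕ, A ≡ B [MOD q] → DHxi q ^ A = DHxi q ^ B :=
    fun A B h => DHxi_congr hq0 h
  have hvpow : ∀ e : ℕ, DHxi q ^ (((g : ZMod q) ^ e).val) = DHxi q ^ (g ^ e) := by
    intro e
    apply hzval
    have h1 : ((g : ZMod q) ^ e) = ((g ^ e : ℕ) : ZMod q) := by push_cast; rfl
    rw [h1, ZMod.val_natCast]
    exact Nat.mod_modEq _ q
  have hmain := DHSval2_eq p q g x hp hq ⟨kp, hkp⟩ ⟨kq, hkq⟩ hpq hgcd hgp hgq hxp hxq hP2 hQ2 b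
  have hetasum : DHeta q (DHQR q) + DHeta q (DHQNR q) = -1 := by
    have hdisj2 : Disjoint (DHQR q) (DHQNR q) := by
      rw [Finset.disjoint_left]
      intro a ha hb
      simp only [DHQR, DHQNR, Finset.mem_filter] at ha hb
      tauto
    have hUnion : DHQR q ∪ DHQNR q = Finset.univ.filter (fun a : ZMod q => a ≠ 0) := by
      ext y
      simp only [DHQR, DHQNR, Finset.mem_union, Finset.mem_filter, Finset.mem_univ, true_and]
      tauto
    rw [DHeta, DHeta, ← Finset.sum_union hdisj2, hUnion, Finset.filter_ne']
    have h1 : (∑ a ∈ Finset.univ.erase (0 : ZMod q), DHxi q ^ a.val) + DHxi q ^ ((0 : ZMod q)).val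
        = ∑ a : ZMod q, DHxi q ^ a.val := Finset.sum_erase_add _ _ (Finset.mem_univ _)
    have h2 : ∑ a : ZMod q, DHxi q ^ a.val = 0 := by
      rw [DHsum_zmod q (fun n => DHxi q ^ n)]
      exact (Complex.isPrimitiveRoot_exp q hq0).geom_sum_eq_zero hq.one_lt
    rw [h2] at h1
    rw [ZMod.val_zero, pow_zero] at h1
    linear_combination h1
  have hinjodd : ∀ a ∈ range kq, ∀ a' ∈ range kq,
      (g : ZMod q) ^ (2*a+1) = (g : ZMod q) ^ (2*a'+1) → a = a' := by
    intro a ha a' ha' h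
    have ha1 := Finset.mem_range.mp ha
    have ha2 := Finset.mem_range.mp ha'
    rw [DHpowEq hgfin, hgq, hQ2, Nat.ModEq,
      Nat.mod_eq_of_lt (by omega), Nat.mod_eq_of_lt (by omega)] at h
    omega
  have hinjev : ∀ a ∈ range kq, ∀ a' ∈ range kq,
      (g : ZMod q) ^ (2*a) = (g : ZMod q) ^ (2*a') → a = a' := by
    intro a ha a' ha' h
    have ha1 := Finset.mem_range.mp ha
    have ha2 := Finset.mem_range.mp ha'
    rw [DHpowEq hgfin, hgq, hQ2, Nat.ModEq,
      Nat.mod_eq_of_lt (by omega), Nat.mod_eq_of_lt (by omega)] at h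
    omega
  constructor
  · -- b is a QR
    intro hb
    rw [← DHQR_image hq hgq hQ2] at hb
    obtain ⟨u, hu, hbu⟩ := Finset.mem_image.mp hb
    have hbmod : b ≡ g ^ (2*u) [MOD q] := by
      apply (ZMod.natCast_eq_natCast_iff _ _ _).mp
      push_cast
      exact hbu.symm
    have hW : ∀ m, (fun m => DHxi q ^ (((g : ZMod q) ^ (2*m+1)).val)) (m + kq) =
        (fun m => DHxi q ^ (((g : ZMod q) ^ (2*m+1)).val)) m := by
      intro m
      simp only
      congr 2
      have he : 2*(m+kq)+1 = (2*m+1) + (q-1) := by omega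
      rw [he, pow_add, hgzq1, mul_one]
    have hterm : ∀ t : ℕ, DHxi q ^ (b * g ^ (2*t+1)) =
        DHxi q ^ (((g : ZMod q) ^ (2*(t+u)+1)).val) := by
      intro t
      rw [hvpow (2*(t+u)+1)]
      apply hzval
      calc b * g ^ (2*t+1) ≡ g ^ (2*u) * g ^ (2*t+1) [MOD q] := hbmod.mul_right _
        _ = g ^ (2*(t+u)+1) := by rw [← pow_add]; congr 1; ring
    have hsum : ∑ t ∈ range kq, DHxi q ^ (b * g ^ (2*t+1)) = DHeta q (DHQNR q) := by
      calc ∑ t ∈ range kq, DHxi q ^ (b * g ^ (2*t+1))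
          = ∑ t ∈ range kq, (fun m => DHxi q ^ (((g : ZMod q) ^ (2*m+1)).val)) (t + u) :=
            Finset.sum_congr rfl (fun t _ => hterm t)
        _ = ∑ t ∈ range kq, (fun m => DHxi q ^ (((g : ZMod q) ^ (2*m+1)).val)) t :=
            DHshift_sum (fun m => DHxi q ^ (((g : ZMod q) ^ (2*m+1)).val)) kq hW u
        _ = DHeta q (DHQNR q) := by
            rw [DHeta, ← DHQNR_image hq hgq hQ2, Finset.sum_image hinjodd]
    rw [hmain, hsum]
    linear_combination ((p : ℂ) - 1) * hetasum
  · -- b is a QNR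
    intro hb
    rw [← DHQNR_image hq hgq hQ2] at hb
    obtain ⟨u, hu, hbu⟩ := Finset.mem_image.mp hb
    have hbmod : b ≡ g ^ (2*u+1) [MOD q] := by
      apply (ZMod.natCast_eq_natCast_iff _ _ _).mp
      push_cast
      exact hbu.symm
    have hW : ∀ m, (fun m => DHxi q ^ (((g : ZMod q) ^ (2*m)).val)) (m + kq) =
        (fun m => DHxi q ^ (((g : ZMod q) ^ (2*m)).val)) m := by
      intro m
      simp only
      congr 2
      have he : 2*(m+kq) = (2*m) + (q-1) := by omega
      rw [he, pow_add, hgzq1, mul_one]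
    have hterm : ∀ t : ℕ, DHxi q ^ (b * g ^ (2*t+1)) =
        DHxi q ^ (((g : ZMod q) ^ (2*(t+(u+1)))).val) := by
      intro t
      rw [hvpow (2*(t+(u+1)))]
      apply hzval
      calc b * g ^ (2*t+1) ≡ g ^ (2*u+1) * g ^ (2*t+1) [MOD q] := hbmod.mul_right _
        _ = g ^ (2*(t+(u+1))) := by rw [← pow_add]; congr 1; ring
    have hsum : ∑ t ∈ range kq, DHxi q ^ (b * g ^ (2*t+1)) = DHeta q (DHQR q) := by
      calc ∑ t ∈ range kq, DHxi q ^ (b * g ^ (2*t+1))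
          = ∑ t ∈ range kq, (fun m => DHxi q ^ (((g : ZMod q) ^ (2*m)).val)) (t + (u+1)) :=
            Finset.sum_congr rfl (fun t _ => hterm t)
        _ = ∑ t ∈ range kq, (fun m => DHxi q ^ (((g : ZMod q) ^ (2*m)).val)) t :=
            DHshift_sum (fun m => DHxi q ^ (((g : ZMod q) ^ (2*m)).val)) kq hW (u+1)
        _ = DHeta q (DHQR q) := by
            rw [DHeta, ← DHQR_image hq hgq hQ2, Finset.sum_image hinjev]
    rw [hmain, hsum]
    linear_combination ((p : ℂ) - 1) * hetasum
end
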